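/- arXiv:1008.4764 — 8 statements merged into one kernel-verified Lean document; each statement's English description precedes it below -/
import Mathlib

section
/- Suppose (K; a_1,…,a_m) underlies a complete simplicial fan in ℝ^n. Then the action of R on U(K) is proper: the map R × U(K) → U(K) × U(K), (y, z) ↦ (y·z, z), is a proper map, i.e. the preimage of every compact subset of U(K) × U(K) is compact. -/
/-!
Take an ultrafilter on the preimage. Along it `(y • z, z)` converges to some `(w, z₀) ∈ V`;
put `I = {i | z₀ i = 0}`, `J = {i | w i = 0}`, both in `K`. It suffices that `t = log y` stays
bounded: then `t` converges, and the limit point lies in the preimage. For `i ∉ I` the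
coordinate `y i ≈ ‖w i‖ / ‖z₀ i‖` is bounded above, and for `i ∉ J` it is bounded away from `0`.
So `t` lies in `{t | ∑ tᵢ aᵢ = 0, tᵢ ≤ C off I, -tᵢ ≤ C off J}`, whose only recession direction
is `0`: if `u` is one, then `u⁺` and `u⁻` represent the same vector in `σ_I` and in `σ_J`, hence
in `σ_{I ∩ J}`, and linear independence on `I` and on `J` forces `u⁺ = u⁻`, i.e. `u = 0`.
Compactness of the unit sphere makes this quantitative.
-/

open Filter Topology

/-- The simplicial cone spanned by the vectors `a i`, `i ∈ I`: all nonnegative linear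
combinations of the `a i` with `i ∈ I`. -/
def cone {n m : ℕ} (a : Fin m → (Fin n → ℝ)) (I : Set (Fin m)) : Set (Fin n → ℝ) :=
  {x | ∃ μ : Fin m → ℝ, (∀ i, 0 ≤ μ i) ∧ (∀ i, i ∉ I → μ i = 0) ∧ x = ∑ i, μ i • a i}

theorem LinearIndepOn.eq_of_sum_smul_eq {ι R M : Type*} [Fintype ι] [Ring R] [AddCommGroup M]
    [Module R M] {v : ι → M} {s : Set ι} (hs : LinearIndepOn R v s) {f g : ι → R}
    (hf : ∀ i ∉ s, f i = 0) (hg : ∀ i ∉ s, g i = 0) (h : ∑ i, f i • v i = ∑ i, g i • v i) :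
    f = g := by
  have key := linearIndepOn_iffₛ.1 hs ((Finsupp.linearEquivFunOnFinite R R ι).symm f)
    ((Finsupp.mem_supported' R _).2 hf) ((Finsupp.linearEquivFunOnFinite R R ι).symm g)
    ((Finsupp.mem_supported' R _).2 hg)
  simpa [Finsupp.linearCombination_eq_fintype_linearCombination_apply,
    Fintype.linearCombination_apply, h] using key

theorem exists_pos_mul_norm_le_of_homogeneous {E : Type*} [NormedAddCommGroup E]
    [NormedSpace ℝ E] [ProperSpace E] {g : E → ℝ} (hg : Continuous g)
    (hsmul : ∀ c : ℝ, 0 ≤ c → ∀ u, g (c • u) = c * g u) (hpos : ∀ u ≠ 0, 0 < g u) :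
    ∃ c > 0, ∀ u, c * ‖u‖ ≤ g u := by
  obtain ⟨c, hc, hcg⟩ := (isCompact_sphere (0 : E) 1).exists_forall_le' hg.continuousOn
    fun u hu => hpos u (ne_zero_of_mem_unit_sphere ⟨u, hu⟩)
  refine ⟨c, hc, fun u => ?_⟩
  rcases eq_or_ne u 0 with rfl | hu
  · simpa using (hsmul 0 le_rfl 0).ge
  · have hnorm : 0 < ‖u‖ := norm_pos_iff.2 hu
    have := hcg (‖u‖⁻¹ • u) (by simp [norm_smul, hnorm.ne'])
    calc c * ‖u‖ ≤ g (‖u‖⁻¹ • u) * ‖u‖ := by gcongr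
      _ = g u := by rw [hsmul _ (by positivity)]; field_simp

theorem eventually_log_le_of_tendsto_mul {α : Type*} {l : Filter α} {y f : α → ℝ} {r s : ℝ}
    (hy : ∀ᶠ x in l, 0 < y x) (hyf : Tendsto (fun x => y x * f x) l (𝓝 r))
    (hf : Tendsto f l (𝓝 s)) (hs : s ≠ 0) : ∀ᶠ x in l, Real.log (y x) ≤ r / s := by
  have hy_lim : Tendsto y l (𝓝 (r / s)) :=
    (hyf.div hf hs).congr' ((hf.eventually_ne hs).mono fun _ hx => by simp [hx])
  filter_upwards [hy_lim.eventually (eventually_lt_nhds (lt_add_one _)), hy] with x hlt hpos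
  linarith [Real.log_le_sub_one_of_pos hpos]

theorem tendsto_of_tendsto_log {α ι : Type*} {l : Filter α} {y : α → ι → ℝ} {τ : ι → ℝ}
    (hy : ∀ᶠ x in l, ∀ i, 0 < y x i) (hlog : Tendsto (fun x i => Real.log (y x i)) l (𝓝 τ)) :
    Tendsto y l (𝓝 fun i => Real.exp (τ i)) :=
  (((continuous_pi fun i => Real.continuous_exp.comp (continuous_apply i)).tendsto τ).comp
    hlog).congr' (hy.mono fun _ hx => funext fun i => Real.exp_log (hx i))

section Fan

variable {n m : ℕ} {a : Fin m → Fin n → ℝ} {I J : Set (Fin m)}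

theorem eq_zero_of_sum_smul_eq_zero_of_cone_inter (hI : LinearIndepOn ℝ a I)
    (hJ : LinearIndepOn ℝ a J) (hIJ : cone a I ∩ cone a J = cone a (I ∩ J))
    {u : Fin m → ℝ} (hu : ∑ i, u i • a i = 0) (huI : ∀ i ∉ I, u i ≤ 0)
    (huJ : ∀ i ∉ J, 0 ≤ u i) : u = 0 := by
  set p : Fin m → ℝ := fun i => max (u i) 0
  set q : Fin m → ℝ := fun i => max (-u i) 0
  have hupq : u = p - q := funext fun i => (max_zero_sub_max_neg_zero_eq_self (u i)).symm
  have hpq : ∑ i, p i • a i = ∑ i, q i • a i := by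
    rw [← sub_eq_zero, ← Finset.sum_sub_distrib, ← hu, hupq]
    simp only [Pi.sub_apply, sub_smul]
  have hp : ∀ i ∉ I, p i = 0 := fun i hi => max_eq_right (huI i hi)
  have hq : ∀ i ∉ J, q i = 0 := fun i hi => max_eq_right (neg_nonpos.2 (huJ i hi))
  obtain ⟨ν, -, hν, hνp⟩ : ∑ i, p i • a i ∈ cone a (I ∩ J) :=
    hIJ ▸ ⟨⟨p, fun _ => le_max_right _ _, hp, rfl⟩, ⟨q, fun _ => le_max_right _ _, hq, hpq⟩⟩
  have hpν : p = ν := hI.eq_of_sum_smul_eq hp (fun i hi => hν i (hi ·.1)) hνp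
  have hqν : q = ν := hJ.eq_of_sum_smul_eq hq (fun i hi => hν i (hi ·.2)) (hpq ▸ hνp)
  rw [hupq, hpν, hqν, sub_self]

theorem exists_norm_le_of_sum_smul_eq_zero (hI : LinearIndepOn ℝ a I)
    (hJ : LinearIndepOn ℝ a J) (hIJ : cone a I ∩ cone a J = cone a (I ∩ J)) (b : Fin m → ℝ) :
    ∃ R, ∀ t : Fin m → ℝ, ∑ i, t i • a i = 0 → (∀ i ∉ I, t i ≤ b i) →
      (∀ i ∉ J, -t i ≤ b i) → ‖t‖ ≤ R := by
  classical
  let g : (Fin m → ℝ) → ℝ := fun u => ‖∑ i, u i • a i‖ +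
    ∑ i ∈ {i | i ∉ I}, max (u i) 0 + ∑ i ∈ {i | i ∉ J}, max (-u i) 0
  have hg_smul : ∀ c : ℝ, 0 ≤ c → ∀ u, g (c • u) = c * g u := by
    intro c hc u
    have hmax : ∀ x, max (c * x) 0 = c * max x 0 := fun x => by
      rw [mul_max_of_nonneg _ _ hc, mul_zero]
    simp only [g, Pi.smul_apply, smul_eq_mul, mul_smul, ← Finset.smul_sum, norm_smul,
      Real.norm_eq_abs, abs_of_nonneg hc, ← mul_neg, hmax, ← Finset.mul_sum]
    ring
  have hg_pos : ∀ u ≠ 0, 0 < g u := by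
    intro u hu
    by_contra! hgu
    have hIsum := Finset.sum_nonneg fun i (_ : i ∈ ({i | i ∉ I} : Finset _)) =>
      le_max_right (u i) 0
    have hJsum := Finset.sum_nonneg fun i (_ : i ∈ ({i | i ∉ J} : Finset _)) =>
      le_max_right (-u i) 0
    have hnorm := norm_nonneg (∑ i, u i • a i)
    refine hu (eq_zero_of_sum_smul_eq_zero_of_cone_inter hI hJ hIJ
      (norm_le_zero_iff.1 (by linarith)) (fun i hi => ?_) (fun i hi => ?_))
    · have := Finset.single_le_sum (fun j _ => le_max_right (u j) 0)
        (Finset.mem_filter.2 ⟨Finset.mem_univ i, hi⟩ : i ∈ ({i | i ∉ I} : Finset _))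
      exact (le_max_left _ _).trans (by linarith)
    · have := Finset.single_le_sum (fun j _ => le_max_right (-u j) 0)
        (Finset.mem_filter.2 ⟨Finset.mem_univ i, hi⟩ : i ∈ ({i | i ∉ J} : Finset _))
      exact neg_nonpos.1 ((le_max_left _ _).trans (by linarith))
  obtain ⟨c, hc, hcg⟩ := exists_pos_mul_norm_le_of_homogeneous (g := g) (by fun_prop) hg_smul hg_pos
  refine ⟨(∑ i ∈ {i | i ∉ I}, max (b i) 0 + ∑ i ∈ {i | i ∉ J}, max (b i) 0) / c,
    fun t ht htI htJ => (le_div_iff₀' hc).2 ?_⟩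
  calc c * ‖t‖ ≤ g t := hcg t
    _ ≤ _ := by
      simp only [g, ht, norm_zero, zero_add]
      gcongr with i hi i hi
      · exact htI i (Finset.mem_filter.1 hi).2
      · exact htJ i (Finset.mem_filter.1 hi).2

theorem exists_eventually_norm_log_le (hI : LinearIndepOn ℝ a I) (hJ : LinearIndepOn ℝ a J)
    (hIJ : cone a I ∩ cone a J = cone a (I ∩ J)) {α : Type*} {l : Filter α}
    {y : α → Fin m → ℝ} {z : α → Fin m → ℂ} {w z₀ : Fin m → ℂ} (hz₀I : ∀ i ∉ I, z₀ i ≠ 0)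
    (hwJ : ∀ i ∉ J, w i ≠ 0) (hy : ∀ᶠ x in l, ∀ i, 0 < y x i)
    (hlog : ∀ᶠ x in l, ∑ i, Real.log (y x i) • a i = 0)
    (hyz : Tendsto (fun x i => (y x i : ℂ) * z x i) l (𝓝 w)) (hz : Tendsto z l (𝓝 z₀)) :
    ∃ R, ∀ᶠ x in l, ‖fun i => Real.log (y x i)‖ ≤ R := by
  obtain ⟨R, hR⟩ := exists_norm_le_of_sum_smul_eq_zero hI hJ hIJ
    fun i => ‖w i‖ / ‖z₀ i‖ + ‖z₀ i‖ / ‖w i‖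
  have hyi : ∀ i, ∀ᶠ x in l, 0 < y x i := fun i => hy.mono fun x hx => hx i
  have hyz_norm : ∀ i, Tendsto (fun x => y x i * ‖z x i‖) l (𝓝 ‖w i‖) := fun i =>
    (tendsto_pi_nhds.1 hyz i).norm.congr' <| by
      filter_upwards [hyi i] with x hx
      simp [abs_of_pos hx]
  have hz_norm : ∀ i, Tendsto (fun x => ‖z x i‖) l (𝓝 ‖z₀ i‖) := fun i =>
    (tendsto_pi_nhds.1 hz i).norm
  have hup : ∀ i ∉ I, ∀ᶠ x in l, Real.log (y x i) ≤ ‖w i‖ / ‖z₀ i‖ := fun i hi =>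
    eventually_log_le_of_tendsto_mul (hyi i) (hyz_norm i) (hz_norm i)
      (norm_ne_zero_iff.2 (hz₀I i hi))
  -- the upper bound for `y⁻¹`, with the roles of `z` and `y * z` exchanged
  have hlow : ∀ i ∉ J, ∀ᶠ x in l, -Real.log (y x i) ≤ ‖z₀ i‖ / ‖w i‖ := fun i hi => by
    have hz_norm' : Tendsto (fun x => (y x i)⁻¹ * (y x i * ‖z x i‖)) l (𝓝 ‖z₀ i‖) :=
      (hz_norm i).congr' <| by
        filter_upwards [hyi i] with x hx
        field_simp
    simpa [Real.log_inv] using eventually_log_le_of_tendsto_mul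
      (by filter_upwards [hyi i] with x hx; positivity) hz_norm' (hyz_norm i)
      (norm_ne_zero_iff.2 (hwJ i hi))
  refine ⟨R, ?_⟩
  filter_upwards [hlog, eventually_all.2 fun i => eventually_imp_distrib_left.2 (hup i),
    eventually_all.2 fun i => eventually_imp_distrib_left.2 (hlow i)] with x hx hxI hxJ
  exact hR _ hx (fun i hi => (hxI i hi).trans (le_add_of_nonneg_right (by positivity)))
    (fun i hi => (hxJ i hi).trans (le_add_of_nonneg_left (by positivity)))

end Fan

theorem R_action_on_UK_is_proper_general (n m : ℕ)
    (a : Fin m → (Fin n → ℝ)) (K : Set (Set (Fin m)))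
    (hInd : ∀ I ∈ K, LinearIndependent ℝ (fun i : I => a i.1))
    (hInter : ∀ I ∈ K, ∀ J ∈ K, cone a I ∩ cone a J = cone a (I ∩ J)) :
    ∀ V : Set ((Fin m → ℂ) × (Fin m → ℂ)),
      V ⊆ {z | {i | z i = 0} ∈ K} ×ˢ {z | {i | z i = 0} ∈ K} →
      IsCompact V →
      IsCompact {p : (Fin m → ℝ) × (Fin m → ℂ) |
        ((∀ i, 0 < p.1 i) ∧ ∑ i, Real.log (p.1 i) • a i = 0) ∧
        {i | p.2 i = 0} ∈ K ∧
        ((fun i => (p.1 i : ℂ) * p.2 i), p.2) ∈ V} := by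
  intro V hVU hV
  rw [isCompact_iff_ultrafilter_le_nhds]
  intro 𝒰 h𝒰
  have hS := le_principal_iff.1 h𝒰
  obtain ⟨⟨w, z₀⟩, hwz₀, hlim⟩ := hV.ultrafilter_le_nhds
    (𝒰.map fun p => ((fun i => (p.1 i : ℂ) * p.2 i), p.2))
    (tendsto_principal.2 (eventually_of_mem hS fun p hp => hp.2.2))
  obtain ⟨hw, hz₀⟩ := hVU hwz₀
  have hyz := (continuous_fst.tendsto _).comp hlim
  have hz := (continuous_snd.tendsto _).comp hlim
  obtain ⟨R, hR⟩ := exists_eventually_norm_log_le (hInd _ hz₀) (hInd _ hw) (hInter _ hz₀ _ hw)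
    (fun i hi => hi) (fun i hi => hi) (eventually_of_mem hS fun p hp => hp.1.1)
    (eventually_of_mem hS fun p hp => hp.1.2) hyz hz
  obtain ⟨τ, -, hτ⟩ := (isCompact_closedBall (0 : Fin m → ℝ) R).ultrafilter_le_nhds
    (𝒰.map fun p i => Real.log (p.1 i))
    (tendsto_principal.2 (hR.mono fun p hp => mem_closedBall_zero_iff.2 hp))
  have hy : Tendsto Prod.fst (𝒰 : Filter ((Fin m → ℝ) × (Fin m → ℂ)))
      (𝓝 fun i => Real.exp (τ i)) :=
    tendsto_of_tendsto_log (eventually_of_mem hS fun p hp => hp.1.1) hτ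
  refine ⟨(fun i => Real.exp (τ i), z₀), ⟨⟨fun i => Real.exp_pos _, ?_⟩, hz₀, ?_⟩,
    hy.prodMk_nhds hz⟩
  · have hsum : Continuous fun t : Fin m → ℝ => ∑ i, t i • a i := by fun_prop
    simp only [Real.log_exp]
    exact tendsto_nhds_unique ((hsum.tendsto τ).comp hτ)
      (tendsto_const_nhds.congr' (eventually_of_mem hS fun p hp => hp.1.2.symm))
  · convert hwz₀ using 2
    have hmul : Continuous fun q : (Fin m → ℝ) × (Fin m → ℂ) => fun i => (q.1 i : ℂ) * q.2 i :=
      by fun_prop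
    exact tendsto_nhds_unique ((hmul.tendsto _).comp (hy.prodMk_nhds hz)) hyz

/-- If `(K; a₁, …, a_m)` underlies a complete simplicial fan in ℝⁿ, then the
action of `R` on `U(K)` is proper: the map `R × U(K) → U(K) × U(K)`, `(y, z) ↦ (y·z, z)`,
has compact preimages of compact sets. -/
theorem R_action_on_UK_is_proper (n m : ℕ) (hn : 1 ≤ n) (hm : 1 ≤ m)
    (a : Fin m → (Fin n → ℝ)) (K : Set (Set (Fin m)))
    (hKempty : ∅ ∈ K) (hKdown : ∀ I ∈ K, ∀ J ⊆ I, J ∈ K)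
    (hInd : ∀ I ∈ K, LinearIndependent ℝ (fun i : I => a i.1))
    (hInter : ∀ I ∈ K, ∀ J ∈ K, cone a I ∩ cone a J = cone a (I ∩ J))
    (hCover : (⋃ I ∈ K, cone a I) = Set.univ) :
    ∀ V : Set ((Fin m → ℂ) × (Fin m → ℂ)),
      V ⊆ {z | {i | z i = 0} ∈ K} ×ˢ {z | {i | z i = 0} ∈ K} →
      IsCompact V →
      IsCompact {p : (Fin m → ℝ) × (Fin m → ℂ) |
        ((∀ i, 0 < p.1 i) ∧ ∑ i, Real.log (p.1 i) • a i = 0) ∧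
        {i | p.2 i = 0} ∈ K ∧
        ((fun i => (p.1 i : ℂ) * p.2 i), p.2) ∈ V} :=
  R_action_on_UK_is_proper_general n m a K hInd hInter
end

section
/- Suppose (K; a_1,…,a_m) underlies a complete simplicial fan in ℝ^n. Then the map from {x ∈ ℝ^m : x_i ≤ 0 for all i, and {i : x_i ≠ 0} ∈ K} to ℝ^n sending x to Σ_{i=1}^m x_i a_i is a bijection. -/
/-!
If `x` is nonpositive with support `I ∈ K`, then `-x` is the coefficient vector of a point of
`σ_I`, so surjectivity is completeness of the fan applied to `-y`. For injectivity, two such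
`x`, `y` with the same image give one point of `σ_I ∩ σ_J = σ_{I ∩ J}`; its coefficient vector
`ν` supported on `I ∩ J` equals both `-x` and `-y`, by linear independence of the `a i`, `i ∈ I`
(resp. `i ∈ J`).
-/

open Function

theorem LinearIndepOn.injOn_sum_smul {ι R M : Type*} [Fintype ι] [Ring R] [AddCommGroup M]
    [Module R M] {a : ι → M} {I : Set ι} (hI : LinearIndepOn R a I) :
    Set.InjOn (fun x : ι → R => ∑ i, x i • a i) {x | support x ⊆ I} := by
  intro x hx y hy hxy
  have heq := linearIndepOn_iffₛ.1 hI (Finsupp.equivFunOnFinite.symm x) ?_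
    (Finsupp.equivFunOnFinite.symm y) ?_ ?_
  · simpa using congrArg Finsupp.equivFunOnFinite heq
  · simpa [Finsupp.mem_supported] using hx
  · simpa [Finsupp.mem_supported] using hy
  · simpa [Finsupp.linearCombination_apply, Finsupp.sum_fintype] using hxy

section Fan

variable {n m : ℕ} (a : Fin m → Fin n → ℝ)

theorem neg_sum_smul_mem_cone {x : Fin m → ℝ} (hx : ∀ i, x i ≤ 0) :
    -∑ i, x i • a i ∈ cone a (support x) :=
  ⟨-x, fun i => neg_nonneg.2 (hx i), fun i hi => by simpa using hi, by simp [neg_smul]⟩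

theorem injOn_sum_smul_of_fan {K : Set (Set (Fin m))}
    (hInd : ∀ I ∈ K, LinearIndepOn ℝ a I)
    (hInter : ∀ I ∈ K, ∀ J ∈ K, cone a I ∩ cone a J = cone a (I ∩ J)) :
    Set.InjOn (fun x : Fin m → ℝ => ∑ i, x i • a i) {x | (∀ i, x i ≤ 0) ∧ support x ∈ K} := by
  rintro x ⟨hx, hxK⟩ y ⟨hy, hyK⟩ (hxy : ∑ i, x i • a i = ∑ i, y i • a i)
  obtain ⟨ν, -, hν, hνsum⟩ : -∑ i, x i • a i ∈ cone a (support x ∩ support y) := by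
    rw [← hInter _ hxK _ hyK]
    exact ⟨neg_sum_smul_mem_cone a hx, hxy ▸ neg_sum_smul_mem_cone a hy⟩
  have hνsupp := support_subset_iff'.2 hν
  have hxν : -x = ν := (hInd _ hxK).injOn_sum_smul (support_neg x).subset
    (hνsupp.trans Set.inter_subset_left) (by simpa [neg_smul] using hνsum)
  have hyν : -y = ν := (hInd _ hyK).injOn_sum_smul (support_neg y).subset
    (hνsupp.trans Set.inter_subset_right) (by simpa [neg_smul, hxy] using hνsum)
  exact neg_injective (hxν.trans hyν.symm)

theorem surjOn_sum_smul_of_fan {K : Set (Set (Fin m))} (hKdown : ∀ I ∈ K, ∀ J ⊆ I, J ∈ K)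
    (hCover : (⋃ I ∈ K, cone a I) = Set.univ) :
    Set.SurjOn (fun x : Fin m → ℝ => ∑ i, x i • a i)
      {x | (∀ i, x i ≤ 0) ∧ support x ∈ K} Set.univ := by
  intro y _
  obtain ⟨I, hI, μ, hμ, hμI, hμsum⟩ := Set.mem_iUnion₂.1 (hCover.symm ▸ Set.mem_univ (-y))
  have hμsupp : support (-μ) ⊆ I := (support_neg μ).subset.trans (support_subset_iff'.2 hμI)
  exact ⟨-μ, ⟨fun i => neg_nonpos.2 (hμ i), hKdown I hI _ hμsupp⟩, by simp [neg_smul, ← hμsum]⟩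

end Fan

theorem nonpositive_cone_decomposition_bijective_general (n m : ℕ)
    (a : Fin m → (Fin n → ℝ)) (K : Set (Set (Fin m)))
    (hKdown : ∀ I ∈ K, ∀ J ⊆ I, J ∈ K)
    (hInd : ∀ I ∈ K, LinearIndependent ℝ (fun i : I => a i.1))
    (hInter : ∀ I ∈ K, ∀ J ∈ K, cone a I ∩ cone a J = cone a (I ∩ J))
    (hCover : (⋃ I ∈ K, cone a I) = Set.univ) :
    Set.BijOn (fun x : Fin m → ℝ => ∑ i, x i • a i)
      {x | (∀ i, x i ≤ 0) ∧ {i | x i ≠ 0} ∈ K} Set.univ :=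
  ⟨Set.mapsTo_univ _ _, injOn_sum_smul_of_fan a hInd hInter, surjOn_sum_smul_of_fan a hKdown hCover⟩

/-- If `(K; a₁, …, a_m)` underlies a complete simplicial fan in ℝⁿ, then the map
`x ↦ Σ_i x_i a_i` restricted to `{x : x_i ≤ 0 ∀i, {i : x_i ≠ 0} ∈ K}` is a bijection onto ℝⁿ. -/
theorem nonpositive_cone_decomposition_bijective (n m : ℕ) (hn : 1 ≤ n) (hm : 1 ≤ m)
    (a : Fin m → (Fin n → ℝ)) (K : Set (Set (Fin m)))
    (hKempty : ∅ ∈ K) (hKdown : ∀ I ∈ K, ∀ J ⊆ I, J ∈ K)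
    (hInd : ∀ I ∈ K, LinearIndependent ℝ (fun i : I => a i.1))
    (hInter : ∀ I ∈ K, ∀ J ∈ K, cone a I ∩ cone a J = cone a (I ∩ J))
    (hCover : (⋃ I ∈ K, cone a I) = Set.univ) :
    Set.BijOn (fun x : Fin m → ℝ => ∑ i, x i • a i)
      {x | (∀ i, x i ≤ 0) ∧ {i | x i ≠ 0} ∈ K} Set.univ :=
  nonpositive_cone_decomposition_bijective_general n m a K hKdown hInd hInter hCover
end

section
/- Suppose (K; a_1,…,a_m) underlies a complete simplicial fan in ℝ^n. Then for every z ∈ U(K) there exists a unique y ∈ R such that y·z ∈ Z_K; that is, every R-orbit in U(K) intersects the moment-angle complex Z_K in exactly one point. -/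
/-- The moment-angle complex `Z_K ⊆ ℂ^m`. -/
def momentAngleComplex (m : ℕ) (K : Set (Set (Fin m))) : Set (Fin m → ℂ) :=
  {z | (∀ i, ‖z i‖ ≤ 1) ∧ {i | ‖z i‖ < 1} ∈ K}

open Filter Topology Real

lemma LinearIndepOn.eq_of_linearCombination_eq {ι R M : Type*} [Fintype ι] [Ring R]
    [AddCommGroup M] [Module R M] {v : ι → M} {s : Set ι} (hs : LinearIndepOn R v s)
    {f g : ι → R} (hf : ∀ i ∉ s, f i = 0) (hg : ∀ i ∉ s, g i = 0)
    (h : Fintype.linearCombination R v f = Fintype.linearCombination R v g) : f = g := by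
  classical
  have hfg : ∀ i ∉ s, (f - g) i = 0 := fun i hi => by simp [hf i hi, hg i hi]
  have hsum : ∑ i ∈ s.toFinset, (f - g) i • v i = 0 := by
    rw [Fintype.sum_subset fun i hi =>
      by_contra fun his => hi (by simp [hfg i (by simpa using his)])]
    simpa [sub_smul, Fintype.linearCombination_apply, sub_eq_zero] using h
  funext i
  by_cases hi : i ∈ s
  · exact sub_eq_zero.mp (linearIndepOn_iff''.mp hs _ _ (by simp) (by simpa using hfg) hsum i
      (by simpa using hi))
  · rw [hf i hi, hg i hi]

section CompleteFan

variable {n m : ℕ} {a : Fin m → Fin n → ℝ} {K : Set (Set (Fin m))}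

lemma isClosed_cone {I : Set (Fin m)} (hI : LinearIndepOn ℝ a I) : IsClosed (cone a I) := by
  let V : Submodule ℝ (Fin m → ℝ) := Submodule.pi Iᶜ fun _ => ⊥
  have hV : ∀ μ, μ ∈ V ↔ ∀ i ∉ I, μ i = 0 := fun μ => by simp [V]
  let T := (Fintype.linearCombination ℝ a).comp V.subtype
  have hT : LinearMap.ker T = ⊥ := LinearMap.ker_eq_bot.mpr fun x y hxy =>
    Subtype.ext <| hI.eq_of_linearCombination_eq ((hV x).mp x.2) ((hV y).mp y.2) hxy
  have hcone : cone a I = T '' {x | 0 ≤ (x : Fin m → ℝ)} := by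
    ext x
    constructor
    · rintro ⟨μ, hμ0, hμI, rfl⟩
      exact ⟨⟨μ, (hV μ).mpr hμI⟩, hμ0, Fintype.linearCombination_apply ℝ a μ⟩
    · rintro ⟨⟨μ, hμI⟩, hμ0, rfl⟩
      exact ⟨μ, hμ0, (hV μ).mp hμI, Fintype.linearCombination_apply ℝ a μ⟩
  rw [hcone]
  exact (LinearMap.isClosedEmbedding_of_injective hT).isClosedMap _
    (isClosed_Ici.preimage continuous_subtype_val)

lemma eq_of_linearCombination_eq_of_nonneg
    (hInd : ∀ I ∈ K, LinearIndependent ℝ (fun i : I => a i.1))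
    (hInter : ∀ I ∈ K, ∀ J ∈ K, cone a I ∩ cone a J = cone a (I ∩ J))
    {I J : Set (Fin m)} (hI : I ∈ K) (hJ : J ∈ K) {v w : Fin m → ℝ} (hv : 0 ≤ v) (hw : 0 ≤ w)
    (hvI : ∀ i ∉ I, v i = 0) (hwJ : ∀ i ∉ J, w i = 0)
    (h : Fintype.linearCombination ℝ a v = Fintype.linearCombination ℝ a w) : v = w := by
  have hmem : Fintype.linearCombination ℝ a v ∈ cone a (I ∩ J) := by
    rw [← hInter I hI J hJ]
    exact ⟨⟨v, hv, hvI, Fintype.linearCombination_apply ℝ a v⟩,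
      ⟨w, hw, hwJ, h.trans (Fintype.linearCombination_apply ℝ a w)⟩⟩
  obtain ⟨μ, -, hμIJ, hμ⟩ := hmem
  rw [← Fintype.linearCombination_apply] at hμ
  have hvμ : v = μ := LinearIndepOn.eq_of_linearCombination_eq (hInd I hI) hvI
    (fun i hi => hμIJ i fun h => hi h.1) hμ
  have hwμ : w = μ := LinearIndepOn.eq_of_linearCombination_eq (hInd J hJ) hwJ
    (fun i hi => hμIJ i fun h => hi h.2) (h.symm.trans hμ)
  rw [hvμ, hwμ]

lemma subset_of_indicator_mem_cone
    (hInd : ∀ I ∈ K, LinearIndependent ℝ (fun i : I => a i.1))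
    (hInter : ∀ I ∈ K, ∀ J ∈ K, cone a I ∩ cone a J = cone a (I ∩ J))
    {Z I : Set (Fin m)} (hZ : Z ∈ K) (hI : I ∈ K)
    (h : Fintype.linearCombination ℝ a (Z.indicator 1) ∈ cone a I) : Z ⊆ I := by
  obtain ⟨μ, hμ0, hμI, hμ⟩ := h
  rw [← Fintype.linearCombination_apply] at hμ
  have hμZ : μ = Z.indicator 1 := eq_of_linearCombination_eq_of_nonneg hInd hInter hI hZ hμ0
    (Set.indicator_nonneg fun _ _ => zero_le_one) hμI (fun i hi => Set.indicator_of_notMem hi _)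
    hμ.symm
  intro i hi
  by_contra hiI
  simpa [hμI i hiI, hi] using congr_fun hμZ i

lemma eventually_exists_superset_mem_cone
    (hInd : ∀ I ∈ K, LinearIndependent ℝ (fun i : I => a i.1))
    (hInter : ∀ I ∈ K, ∀ J ∈ K, cone a I ∩ cone a J = cone a (I ∩ J))
    (hCover : (⋃ I ∈ K, cone a I) = Set.univ) {Z : Set (Fin m)} (hZ : Z ∈ K) :
    ∀ᶠ x in 𝓝 (Fintype.linearCombination ℝ a (Z.indicator 1)),
      ∃ I ∈ K, Z ⊆ I ∧ x ∈ cone a I := by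
  set C := ⋃ I ∈ {I | I ∈ K ∧ ¬Z ⊆ I}, cone a I
  have hclosed : IsClosed C :=
    (Set.toFinite _).isClosed_biUnion fun I hI => isClosed_cone (hInd I hI.1)
  have hnotMem : Fintype.linearCombination ℝ a (Z.indicator 1) ∉ C := by
    simp only [C, Set.mem_iUnion, Set.mem_ofPred_eq, not_exists]
    exact fun I ⟨hI, hZI⟩ h => hZI (subset_of_indicator_mem_cone hInd hInter hZ hI h)
  filter_upwards [hclosed.isOpen_compl.mem_nhds hnotMem] with x hx
  obtain ⟨I, hI, hxI⟩ := Set.mem_iUnion₂.mp (hCover.symm ▸ Set.mem_univ x)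
  exact ⟨I, hI, by_contra fun hZI => hx (Set.mem_iUnion₂.mpr ⟨I, ⟨hI, hZI⟩, hxI⟩), hxI⟩

variable (a K) in
def IsStarCoords (Z : Set (Fin m)) (p : Fin n → ℝ) (u : Fin m → ℝ) : Prop :=
  (∀ i ∉ Z, 0 ≤ u i) ∧ Fintype.linearCombination ℝ a u = p ∧ Z ∪ {i | 0 < u i} ∈ K

namespace IsStarCoords

variable {Z : Set (Fin m)} {p : Fin n → ℝ} {u : Fin m → ℝ}

lemma eventually_nonneg_add_smul_indicator (hu : IsStarCoords a K Z p u) :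
    ∀ᶠ t : ℝ in atTop, 0 ≤ u + t • Z.indicator 1 := by
  simp only [Pi.le_def, eventually_all]
  intro i
  by_cases hi : i ∈ Z
  · filter_upwards [eventually_ge_atTop (-u i)] with t ht
    simp [hi]
    linarith
  · exact .of_forall fun t => by simpa [hi] using hu.1 i hi

lemma add_smul_indicator_eq_zero (hu : IsStarCoords a K Z p u) (t : ℝ) :
    ∀ i ∉ Z ∪ {i | 0 < u i}, (u + t • Z.indicator (1 : Fin m → ℝ)) i = 0 := by
  intro i hi
  simp only [Set.mem_union, Set.mem_ofPred_eq, not_or, not_lt] at hi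
  simp [hi.1, le_antisymm hi.2 (hu.1 i hi.1)]

lemma unique (hInd : ∀ I ∈ K, LinearIndependent ℝ (fun i : I => a i.1))
    (hInter : ∀ I ∈ K, ∀ J ∈ K, cone a I ∩ cone a J = cone a (I ∩ J))
    {u' : Fin m → ℝ} (hu : IsStarCoords a K Z p u) (hu' : IsStarCoords a K Z p u') : u = u' := by
  obtain ⟨t, ht, ht'⟩ :=
    (hu.eventually_nonneg_add_smul_indicator.and hu'.eventually_nonneg_add_smul_indicator).exists
  have hsum : Fintype.linearCombination ℝ a (u + t • Z.indicator 1) =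
      Fintype.linearCombination ℝ a (u' + t • Z.indicator 1) := by
    simp only [map_add, hu.2.1, hu'.2.1]
  exact add_right_cancel (eq_of_linearCombination_eq_of_nonneg hInd hInter hu.2.2 hu'.2.2 ht ht'
    (hu.add_smul_indicator_eq_zero t) (hu'.add_smul_indicator_eq_zero t) hsum)

end IsStarCoords

lemma exists_isStarCoords (hKdown : ∀ I ∈ K, ∀ J ⊆ I, J ∈ K)
    (hInd : ∀ I ∈ K, LinearIndependent ℝ (fun i : I => a i.1))
    (hInter : ∀ I ∈ K, ∀ J ∈ K, cone a I ∩ cone a J = cone a (I ∩ J))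
    (hCover : (⋃ I ∈ K, cone a I) = Set.univ) {Z : Set (Fin m)} (hZ : Z ∈ K) (p : Fin n → ℝ) :
    ∃ u, IsStarCoords a K Z p u := by
  set b := Fintype.linearCombination ℝ a (Z.indicator 1)
  have hlim : Tendsto (fun δ : ℝ => b + δ • p) (𝓝[>] 0) (𝓝 b) :=
    ((continuous_const.add (continuous_id.smul continuous_const)).tendsto' 0 b
      (by simp [b])).mono_left nhdsWithin_le_nhds
  obtain ⟨δ, ⟨I, hI, hZI, μ, hμ0, hμI, hμ⟩, hδ⟩ :=
    ((hlim.eventually (eventually_exists_superset_mem_cone hInd hInter hCover hZ)).and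
      self_mem_nhdsWithin).exists
  rw [← Fintype.linearCombination_apply] at hμ
  refine ⟨δ⁻¹ • (μ - Z.indicator 1), fun i hi => ?_, ?_, hKdown I hI _ ?_⟩
  · simpa [hi] using mul_nonneg (inv_nonneg.mpr hδ.le) (hμ0 i)
  · rw [map_smul, map_sub, ← hμ, add_sub_cancel_left, inv_smul_smul₀ hδ.ne']
  · refine Set.union_subset hZI fun i hi => by_contra fun hiI => ?_
    simp [hμI i hiI, Set.indicator_of_notMem (fun h => hiI (hZI h))] at hi

lemma norm_ofReal_mul_eq_exp {y : ℝ} (hy : 0 < y) {w : ℂ} (hw : w ≠ 0) :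
    ‖(y : ℂ) * w‖ = exp (log y + log ‖w‖) := by
  rw [exp_add, exp_log hy, exp_log (norm_pos_iff.mpr hw), norm_mul, Complex.norm_of_nonneg hy.le]

lemma isStarCoords_iff {y : Fin m → ℝ} (hy : ∀ i, 0 < y i) (z : Fin m → ℂ) :
    IsStarCoords a K {i | z i = 0} (-Fintype.linearCombination ℝ a fun i => log ‖z i‖)
        (fun i => -(log (y i) + log ‖z i‖)) ↔
      ∑ i, log (y i) • a i = 0 ∧ (fun i => (y i : ℂ) * z i) ∈ momentAngleComplex m K := by
  have hlin : Fintype.linearCombination ℝ a (fun i => -(log (y i) + log ‖z i‖)) =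
        -Fintype.linearCombination ℝ a (fun i => log ‖z i‖) ↔
      ∑ i, log (y i) • a i = 0 := by
    rw [← Fintype.linearCombination_apply]
    change Fintype.linearCombination ℝ a (-((fun i => log (y i)) + fun i => log ‖z i‖)) = _ ↔ _
    rw [map_neg, map_add, neg_inj, add_eq_right]
  have hle : (∀ i ∉ {i | z i = 0}, 0 ≤ -(log (y i) + log ‖z i‖)) ↔
      ∀ i, ‖(y i : ℂ) * z i‖ ≤ 1 := by
    refine forall_congr' fun i => ?_
    by_cases hz : z i = 0
    · simp [hz]
    · rw [norm_ofReal_mul_eq_exp (hy i) hz, exp_le_one_iff]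
      simp only [Set.mem_ofPred_eq, hz, not_false_eq_true, forall_const, neg_nonneg]
  have hset : {i | z i = 0} ∪ {i | 0 < -(log (y i) + log ‖z i‖)} =
      {i | ‖(y i : ℂ) * z i‖ < 1} := by
    ext i
    by_cases hz : z i = 0
    · simp [hz]
    · rw [Set.mem_ofPred_eq, norm_ofReal_mul_eq_exp (hy i) hz, exp_lt_one_iff]
      simp only [Set.mem_union, Set.mem_ofPred_eq, hz, false_or, neg_pos]
  unfold IsStarCoords
  rw [hlin, hle, hset]
  exact ⟨fun ⟨hle, hlin, hset⟩ => ⟨hlin, hle, hset⟩, fun ⟨hlin, hle, hset⟩ => ⟨hle, hlin, hset⟩⟩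

end CompleteFan

theorem R_orbit_meets_ZK_once_general (n m : ℕ)
    (a : Fin m → (Fin n → ℝ)) (K : Set (Set (Fin m)))
    (hKdown : ∀ I ∈ K, ∀ J ⊆ I, J ∈ K)
    (hInd : ∀ I ∈ K, LinearIndependent ℝ (fun i : I => a i.1))
    (hInter : ∀ I ∈ K, ∀ J ∈ K, cone a I ∩ cone a J = cone a (I ∩ J))
    (hCover : (⋃ I ∈ K, cone a I) = Set.univ) :
    ∀ z : Fin m → ℂ, {i | z i = 0} ∈ K →
      ∃! y : Fin m → ℝ,
        ((∀ i, 0 < y i) ∧ ∑ i, Real.log (y i) • a i = 0) ∧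
        (fun i => (y i : ℂ) * z i) ∈ momentAngleComplex m K := by
  intro z hz
  obtain ⟨u, hu⟩ := exists_isStarCoords hKdown hInd hInter hCover hz
    (-Fintype.linearCombination ℝ a fun i => log ‖z i‖)
  have hpos : ∀ i, 0 < exp (-(u i + log ‖z i‖)) := fun i => exp_pos _
  have hlog : (fun i => -(log (exp (-(u i + log ‖z i‖))) + log ‖z i‖)) = u := by
    funext i
    simp
  refine ⟨fun i => exp (-(u i + log ‖z i‖)), ?_, ?_⟩
  · obtain ⟨hsum, hmem⟩ := (isStarCoords_iff hpos z).mp (hlog ▸ hu)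
    exact ⟨⟨hpos, hsum⟩, hmem⟩
  · rintro y ⟨⟨hy, hsum⟩, hmem⟩
    have hyu := hu.unique hInd hInter ((isStarCoords_iff hy z).mpr ⟨hsum, hmem⟩)
    funext i
    simp [hyu, exp_log (hy i)]

/-- If `(K; a₁, …, a_m)` underlies a complete simplicial fan in ℝⁿ, then every
`R`-orbit in `U(K)` meets the moment-angle complex `Z_K` in exactly one point: for every
`z ∈ U(K)` there is a unique `y ∈ R` with `y·z ∈ Z_K`. -/
theorem R_orbit_meets_ZK_once (n m : ℕ) (hn : 1 ≤ n) (hm : 1 ≤ m)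
    (a : Fin m → (Fin n → ℝ)) (K : Set (Set (Fin m)))
    (hKempty : ∅ ∈ K) (hKdown : ∀ I ∈ K, ∀ J ⊆ I, J ∈ K)
    (hInd : ∀ I ∈ K, LinearIndependent ℝ (fun i : I => a i.1))
    (hInter : ∀ I ∈ K, ∀ J ∈ K, cone a I ∩ cone a J = cone a (I ∩ J))
    (hCover : (⋃ I ∈ K, cone a I) = Set.univ) :
    ∀ z : Fin m → ℂ, {i | z i = 0} ∈ K →
      ∃! y : Fin m → ℝ,
        ((∀ i, 0 < y i) ∧ ∑ i, Real.log (y i) • a i = 0) ∧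
        (fun i => (y i : ℂ) * z i) ∈ momentAngleComplex m K :=
  R_orbit_meets_ZK_once_general n m a K hKdown hInd hInter hCover
end

section
/- Suppose (K; a_1,…,a_m) underlies a complete simplicial fan in ℝ^n. Then the composition of the inclusion Z_K ↪ U(K) with the quotient map U(K) → U(K)/R onto the space of R-orbits (equipped with the quotient topology) is a homeomorphism from Z_K onto U(K)/R. -/
/-- The coordinate subspace arrangement complement `U(K) ⊆ ℂ^m`. -/
def UK (m : ℕ) (K : Set (Set (Fin m))) : Set (Fin m → ℂ) :=
  {z | {i | z i = 0} ∈ K}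

/-- The `R`-orbit relation on `U(K)`: `w` is obtained from `z` by the coordinatewise action of
an element `y ∈ R = exp(Ker Λ_ℝ)`.  The space of `R`-orbits with the quotient topology is
`Quot (ROrbitRel n m a K)`. -/
def ROrbitRel (n m : ℕ) (a : Fin m → (Fin n → ℝ)) (K : Set (Set (Fin m)))
    (z w : UK m K) : Prop :=
  ∃ y : Fin m → ℝ, ((∀ i, 0 < y i) ∧ ∑ i, Real.log (y i) • a i = 0) ∧
    ∀ i, (w : Fin m → ℂ) i = (y i : ℂ) * (z : Fin m → ℂ) i

open Set Filter Topology

theorem exists_homeomorph_quot_of_retraction {S X : Type*} [TopologicalSpace S]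
    [TopologicalSpace X] {r : X → X → Prop} {ι : S → X} {ρ : X → S} (hι : Continuous ι)
    (hρ : Continuous ρ) (hρι : Function.LeftInverse ρ ι) (hr : ∀ x, r (ι (ρ x)) x)
    (hρr : ∀ x y, r x y → ρ x = ρ y) :
    ∃ e : S ≃ₜ Quot r, ∀ s, e s = Quot.mk r (ι s) :=
  ⟨{ toFun := fun s => Quot.mk r (ι s)
     invFun := Quot.lift ρ hρr
     left_inv := hρι
     right_inv := Quot.ind fun x => Quot.sound (hr x)
     continuous_toFun := continuous_quot_mk.comp hι
     continuous_invFun := continuous_quot_lift hρr hρ }, fun _ => rfl⟩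

section Fan

variable {n m : ℕ} {a : Fin m → Fin n → ℝ} {K : Set (Set (Fin m))}

theorem eq_of_sum_smul_eq {J : Set (Fin m)} (hJ : LinearIndependent ℝ fun i : J => a i.1)
    {c c' : Fin m → ℝ} (hc : ∀ i ∉ J, c i = 0) (hc' : ∀ i ∉ J, c' i = 0)
    (h : ∑ i, c i • a i = ∑ i, c' i • a i) : c = c' := by
  classical
  have hsum : ∑ i, (c i - c' i) • a i = 0 := by
    simp only [sub_smul, Finset.sum_sub_distrib, h, sub_self]
  have hout : ∑ i : {i // i ∉ J}, (c i - c' i) • a i = 0 :=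
    Finset.sum_eq_zero fun i _ => by simp [hc i i.2, hc' i i.2]
  rw [← Fintype.sum_subtype_add_sum_subtype (· ∈ J), hout, add_zero] at hsum
  funext i
  by_cases hi : i ∈ J
  · exact sub_eq_zero.1 (Fintype.linearIndependent_iff.1 hJ _ hsum ⟨i, hi⟩)
  · rw [hc i hi, hc' i hi]

theorem exists_leftInverse_sum_smul {J : Set (Fin m)}
    (hJ : LinearIndependent ℝ fun i : J => a i.1) :
    ∃ ψ : (Fin n → ℝ) →ₗ[ℝ] (Fin m → ℝ), (∀ x, ∀ i ∉ J, ψ x i = 0) ∧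
      ∀ c : Fin m → ℝ, (∀ i ∉ J, c i = 0) → ψ (∑ i, c i • a i) = c := by
  let V : Submodule ℝ (Fin m → ℝ) := Submodule.pi Jᶜ fun _ => ⊥
  have hV : ∀ c, c ∈ V ↔ ∀ i ∉ J, c i = 0 := by simp [V, Submodule.mem_pi]
  let f := (Fintype.linearCombination ℝ a).comp V.subtype
  have hf : LinearMap.ker f = ⊥ := LinearMap.ker_eq_bot'.2 fun c hc =>
    Subtype.ext <| eq_of_sum_smul_eq hJ ((hV c).1 c.2) (fun _ _ => rfl) <| by
      simpa [f, Fintype.linearCombination_apply] using hc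
  obtain ⟨g, hg⟩ := f.exists_leftInverse_of_injective hf
  refine ⟨V.subtype.comp g, fun x => (hV _).1 (g x).2, fun c hc => ?_⟩
  simpa [f, Fintype.linearCombination_apply] using
    congr_arg Subtype.val (LinearMap.congr_fun hg ⟨c, (hV c).2 hc⟩)

def partialCone (a : Fin m → Fin n → ℝ) (I J : Set (Fin m)) : Set (Fin n → ℝ) :=
  {x | ∃ c : Fin m → ℝ, (∀ i ∉ I, 0 ≤ c i) ∧ (∀ i ∉ J, c i = 0) ∧ x = ∑ i, c i • a i}

theorem cone_eq_partialCone (J : Set (Fin m)) : cone a J = partialCone a ∅ J := by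
  simp [cone, partialCone]

theorem isClosed_partialCone (I : Set (Fin m)) {J : Set (Fin m)}
    (hJ : LinearIndependent ℝ fun i : J => a i.1) : IsClosed (partialCone a I J) := by
  obtain ⟨ψ, hψJ, hψ⟩ := exists_leftInverse_sum_smul hJ
  have hψc : Continuous ψ := LinearMap.continuous_of_finiteDimensional ψ
  have : partialCone a I J =
      {x | ∑ i, ψ x i • a i = x} ∩ ψ ⁻¹' (Iᶜ.pi fun _ => Ici 0) := by
    ext x
    constructor
    · rintro ⟨c, hcI, hcJ, rfl⟩
      rw [mem_inter_iff, mem_ofPred_eq, mem_preimage, hψ c hcJ]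
      exact ⟨rfl, hcI⟩
    · rintro ⟨hx, hpos⟩
      exact ⟨ψ x, hpos, hψJ x, hx.symm⟩
  rw [this]
  exact (isClosed_eq (by fun_prop) continuous_id).inter
    ((isClosed_set_pi fun _ _ => isClosed_Ici).preimage hψc)

def IsFanDecomp (a : Fin m → Fin n → ℝ) (K : Set (Set (Fin m))) (I : Set (Fin m))
    (x : Fin n → ℝ) (c : Fin m → ℝ) : Prop :=
  (∀ i ∉ I, 0 ≤ c i) ∧ I ∪ {i | c i ≠ 0} ∈ K ∧ x = ∑ i, c i • a i

theorem sum_indicator_notMem_cone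
    (hInd : ∀ I ∈ K, LinearIndependent ℝ fun i : I => a i.1)
    (hInter : ∀ I ∈ K, ∀ J ∈ K, cone a I ∩ cone a J = cone a (I ∩ J))
    {I J : Set (Fin m)} (hI : I ∈ K) (hJ : J ∈ K) (hIJ : ¬I ⊆ J) :
    ∑ i, I.indicator (1 : Fin m → ℝ) i • a i ∉ cone a J := by
  intro hmem
  have hbI : ∑ i, I.indicator (1 : Fin m → ℝ) i • a i ∈ cone a I :=
    ⟨_, indicator_nonneg (by simp), fun _ hi => indicator_of_notMem hi _, rfl⟩
  obtain ⟨ν, -, hνIJ, hν⟩ : ∑ i, I.indicator (1 : Fin m → ℝ) i • a i ∈ cone a (I ∩ J) := by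
    rw [← hInter I hI J hJ]
    exact ⟨hbI, hmem⟩
  obtain ⟨i, hiI, hiJ⟩ := not_subset.1 hIJ
  have := congr_fun (eq_of_sum_smul_eq (hInd I hI) (c := I.indicator 1)
    (fun _ hi => indicator_of_notMem hi _)
    (fun _ hi => hνIJ _ fun h => hi h.1) hν) i
  simp [indicator_of_mem hiI, hνIJ i fun h => hiJ h.2] at this

theorem IsFanDecomp.unique
    (hInd : ∀ I ∈ K, LinearIndependent ℝ fun i : I => a i.1)
    (hInter : ∀ I ∈ K, ∀ J ∈ K, cone a I ∩ cone a J = cone a (I ∩ J))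
    {I : Set (Fin m)} {x : Fin n → ℝ} {c c' : Fin m → ℝ}
    (h : IsFanDecomp a K I x c) (h' : IsFanDecomp a K I x c') : c = c' := by
  obtain ⟨hc, hcK, hx⟩ := h
  obtain ⟨hc', hc'K, hx'⟩ := h'
  set s := ‖c‖ + ‖c'‖
  set b := ∑ i, I.indicator (1 : Fin m → ℝ) i • a i
  set shift : (Fin m → ℝ) → Fin m → ℝ := fun e => e + s • I.indicator 1
  have hsum : ∀ e, ∑ i, shift e i • a i = ∑ i, e i • a i + s • b := fun e => by
    simp [shift, b, add_smul, Finset.sum_add_distrib, Finset.smul_sum, smul_smul]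
  have hsupp : ∀ e, ∀ i ∉ I ∪ {i | e i ≠ 0}, shift e i = 0 := by
    intro e i hi
    simp only [mem_union, mem_ofPred_eq, not_or, not_not] at hi
    simp [shift, hi.2, indicator_of_notMem hi.1]
  have hnonneg : ∀ e, (∀ i ∉ I, 0 ≤ e i) → ‖e‖ ≤ s → ∀ i, 0 ≤ shift e i := by
    intro e he hes i
    by_cases hi : i ∈ I
    · have := (abs_le.1 ((Real.norm_eq_abs _).symm ▸ norm_le_pi_norm e i)).1
      simp only [shift, Pi.add_apply, Pi.smul_apply, indicator_of_mem hi, Pi.one_apply,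
        smul_eq_mul]
      linarith
    · simpa [shift, indicator_of_notMem hi] using he i hi
  -- the cones of the two faces meet in the cone of a common face, where coordinates are unique
  obtain ⟨μ, -, hμ, hxμ⟩ :
      x + s • b ∈ cone a ((I ∪ {i | c i ≠ 0}) ∩ (I ∪ {i | c' i ≠ 0})) := by
    rw [← hInter _ hcK _ hc'K]
    exact ⟨⟨shift c, hnonneg c hc (le_add_of_nonneg_right (norm_nonneg _)), hsupp c,
        by rw [hsum, hx]⟩,
      ⟨shift c', hnonneg c' hc' (le_add_of_nonneg_left (norm_nonneg _)), hsupp c',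
        by rw [hsum, hx']⟩⟩
  have hcμ := eq_of_sum_smul_eq (hInd _ hcK) (hsupp c) (fun i hi => hμ i fun h => hi h.1)
    (by rw [hsum, ← hx, hxμ])
  have hc'μ := eq_of_sum_smul_eq (hInd _ hc'K) (hsupp c') (fun i hi => hμ i fun h => hi h.2)
    (by rw [hsum, ← hx', hxμ])
  exact add_right_cancel (hcμ.trans hc'μ.symm)

open Classical in
noncomputable def fanDecomp (a : Fin m → Fin n → ℝ) (K : Set (Set (Fin m)))
    (I : Set (Fin m)) (x : Fin n → ℝ) : Fin m → ℝ :=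
  if h : ∃ c, IsFanDecomp a K I x c then h.choose else 0

theorem IsFanDecomp.fanDecomp_eq
    (hInd : ∀ I ∈ K, LinearIndependent ℝ fun i : I => a i.1)
    (hInter : ∀ I ∈ K, ∀ J ∈ K, cone a I ∩ cone a J = cone a (I ∩ J))
    {I : Set (Fin m)} {x : Fin n → ℝ} {c : Fin m → ℝ} (h : IsFanDecomp a K I x c) :
    fanDecomp a K I x = c := by
  have hex : ∃ c, IsFanDecomp a K I x c := ⟨c, h⟩
  rw [fanDecomp, dif_pos hex]
  exact hex.choose_spec.unique hInd hInter h

structure IsCompleteSimplicialFan (a : Fin m → Fin n → ℝ) (K : Set (Set (Fin m))) :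
    Prop where
  down : ∀ I ∈ K, ∀ J ⊆ I, J ∈ K
  linearIndependent : ∀ I ∈ K, LinearIndependent ℝ fun i : I => a i.1
  cone_inter : ∀ I ∈ K, ∀ J ∈ K, cone a I ∩ cone a J = cone a (I ∩ J)
  iUnion_cone : ⋃ I ∈ K, cone a I = univ

namespace IsCompleteSimplicialFan

theorem exists_isFanDecomp (hF : IsCompleteSimplicialFan a K) {I : Set (Fin m)} (hI : I ∈ K)
    (x : Fin n → ℝ) : ∃ c, IsFanDecomp a K I x c := by
  set b := ∑ i, I.indicator (1 : Fin m → ℝ) i • a i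
  set B := ⋃ J ∈ {J | J ∈ K ∧ ¬I ⊆ J}, cone a J
  have hB : IsClosed B := (toFinite _).isClosed_biUnion fun J hJ => by
    rw [cone_eq_partialCone]; exact isClosed_partialCone _ (hF.linearIndependent J hJ.1)
  have hb : b ∉ B := by
    simp only [B, mem_iUnion₂]
    rintro ⟨J, ⟨hJ, hIJ⟩, hbJ⟩
    exact sum_indicator_notMem_cone hF.linearIndependent hF.cone_inter hI hJ hIJ hbJ
  obtain ⟨t, ht, htB⟩ : ∃ t : ℝ, 0 < t ∧ b + t • x ∉ B := by
    have hlim : Tendsto (fun t : ℝ => b + t • x) (𝓝[>] 0) (𝓝 b) := by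
      have hcont : Continuous fun t : ℝ => b + t • x := by fun_prop
      simpa using (hcont.tendsto 0).mono_left nhdsWithin_le_nhds
    have hpos : ∀ᶠ t in 𝓝[>] (0 : ℝ), 0 < t := self_mem_nhdsWithin
    exact (hpos.and (hlim.eventually (hB.isOpen_compl.mem_nhds hb))).exists
  obtain ⟨J, hJ, μ, hμ, hμJ, hbx⟩ : ∃ J ∈ K, b + t • x ∈ cone a J := by
    have : b + t • x ∈ ⋃ J ∈ K, cone a J := hF.iUnion_cone ▸ mem_univ _
    simpa using this
  have hIJ : I ⊆ J := by
    by_contra hIJ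
    exact htB (mem_biUnion (show J ∈ {J | J ∈ K ∧ ¬I ⊆ J} from ⟨hJ, hIJ⟩) ⟨μ, hμ, hμJ, hbx⟩)
  refine ⟨t⁻¹ • (μ - I.indicator 1), fun i hi => ?_, hF.down J hJ _ ?_, ?_⟩
  · simpa [indicator_of_notMem hi] using mul_nonneg (inv_nonneg.2 ht.le) (hμ i)
  · rintro i (hi | hi)
    · exact hIJ hi
    · by_contra hiJ
      exact hi (by simp [hμJ i hiJ, indicator_of_notMem fun h => hiJ (hIJ h)])
  · calc x = t⁻¹ • (b + t • x - b) := by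
          rw [add_sub_cancel_left, smul_smul, inv_mul_cancel₀ ht.ne', one_smul]
      _ = _ := by
          rw [hbx, ← Finset.sum_sub_distrib, Finset.smul_sum]
          simp only [← sub_smul, smul_smul, Pi.smul_apply, Pi.sub_apply, smul_eq_mul]

theorem isFanDecomp_fanDecomp (hF : IsCompleteSimplicialFan a K) {I : Set (Fin m)}
    (hI : I ∈ K) (x : Fin n → ℝ) : IsFanDecomp a K I x (fanDecomp a K I x) := by
  have h := hF.exists_isFanDecomp hI x
  rw [fanDecomp, dif_pos h]
  exact h.choose_spec

theorem continuous_fanDecomp (hF : IsCompleteSimplicialFan a K) {I : Set (Fin m)}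
    (hI : I ∈ K) : Continuous (fanDecomp a K I) := by
  choose ψ hψJ hψ using fun J : {J // J ∈ K} => exists_leftInverse_sum_smul
    (hF.linearIndependent J J.2)
  have hpiece : ∀ J : {J // J ∈ K ∧ I ⊆ J},
      EqOn (fanDecomp a K I) (ψ ⟨J, J.2.1⟩) (partialCone a I J) := by
    rintro ⟨J, hJ, hIJ⟩ x ⟨c, hcI, hcJ, rfl⟩
    have hcK : I ∪ {i | c i ≠ 0} ∈ K :=
      hF.down J hJ _ (union_subset hIJ fun i hi => by_contra fun hiJ => hi (hcJ i hiJ))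
    rw [IsFanDecomp.fanDecomp_eq hF.linearIndependent hF.cone_inter ⟨hcI, hcK, rfl⟩,
      hψ _ c hcJ]
  have hcover : ⋃ J : {J // J ∈ K ∧ I ⊆ J}, partialCone a I J = univ := by
    refine eq_univ_of_forall fun x => mem_iUnion.2 ?_
    obtain ⟨hcI, hcK, hx⟩ := hF.isFanDecomp_fanDecomp hI x
    exact ⟨⟨_, hcK, subset_union_left⟩, _, hcI,
      fun i hi => by_contra fun h => hi (Or.inr h), hx⟩
  exact (locallyFinite_of_finite _).continuous hcover
    (fun J => isClosed_partialCone I (hF.linearIndependent J J.2.1))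
    fun J => (LinearMap.continuous_of_finiteDimensional _).continuousOn.congr (hpiece J)

end IsCompleteSimplicialFan

/-- `w = y • z` with `y = exp v ∈ R`, recorded through `v = log y`. -/
def SameROrbit (a : Fin m → Fin n → ℝ) (z w : Fin m → ℂ) : Prop :=
  ∃ v : Fin m → ℝ, ∑ i, v i • a i = 0 ∧ ∀ i, w i = Real.exp (v i) * z i

theorem SameROrbit.symm {z w : Fin m → ℂ} (h : SameROrbit a z w) : SameROrbit a w z := by
  obtain ⟨v, hv, hw⟩ := h
  refine ⟨-v, by simp [neg_smul, Finset.sum_neg_distrib, hv], fun i => ?_⟩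
  rw [hw i, ← mul_assoc, ← Complex.ofReal_mul, ← Real.exp_add]
  simp

theorem SameROrbit.trans {z w u : Fin m → ℂ} (h : SameROrbit a z w) (h' : SameROrbit a w u) :
    SameROrbit a z u := by
  obtain ⟨v, hv, hw⟩ := h
  obtain ⟨v', hv', hu⟩ := h'
  refine ⟨v' + v, by simp [add_smul, Finset.sum_add_distrib, hv, hv'], fun i => ?_⟩
  rw [hu i, hw i, ← mul_assoc, ← Complex.ofReal_mul, ← Real.exp_add]
  rfl

theorem rOrbitRel_iff {z w : UK m K} : ROrbitRel n m a K z w ↔ SameROrbit a z w := by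
  constructor
  · rintro ⟨y, ⟨hy, hlog⟩, hw⟩
    exact ⟨fun i => Real.log (y i), hlog, fun i => by rw [hw i, Real.exp_log (hy i)]⟩
  · rintro ⟨v, hv, hw⟩
    exact ⟨fun i => Real.exp (v i), ⟨fun i => Real.exp_pos _, by simpa using hv⟩, hw⟩

theorem momentAngleComplex_subset_UK (hKdown : ∀ I ∈ K, ∀ J ⊆ I, J ∈ K) :
    momentAngleComplex m K ⊆ UK m K := fun z hz =>
  hKdown _ hz.2 _ fun i (hi : z i = 0) => by simp [hi]

theorem isFanDecomp_of_mem_momentAngleComplex (hKdown : ∀ I ∈ K, ∀ J ⊆ I, J ∈ K)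
    {w : Fin m → ℂ} (hw : w ∈ momentAngleComplex m K) {c : Fin m → ℝ}
    (hc : ∀ i, w i ≠ 0 → c i = -Real.log ‖w i‖) :
    IsFanDecomp a K {i | w i = 0} (∑ i, c i • a i) c := by
  refine ⟨fun i hi => (hc i hi).symm ▸ neg_nonneg.2 (Real.log_nonpos (norm_nonneg _) (hw.1 i)),
    hKdown _ hw.2 _ ?_, rfl⟩
  rintro i (hi | hi)
  · simp [show w i = 0 from hi]
  · by_cases hwi : w i = 0
    · simp [hwi]
    · refine (hw.1 i).lt_of_ne fun h => hi ?_
      simp [hc i hwi, h]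

theorem eq_of_sameROrbit (hKdown : ∀ I ∈ K, ∀ J ⊆ I, J ∈ K)
    (hInd : ∀ I ∈ K, LinearIndependent ℝ fun i : I => a i.1)
    (hInter : ∀ I ∈ K, ∀ J ∈ K, cone a I ∩ cone a J = cone a (I ∩ J))
    {w w' : Fin m → ℂ} (hw : w ∈ momentAngleComplex m K) (hw' : w' ∈ momentAngleComplex m K)
    (h : SameROrbit a w w') : w = w' := by
  obtain ⟨v, hv, hw'w⟩ := h
  have hzero : {i | w' i = 0} = {i | w i = 0} := by
    ext i
    simp [hw'w i]
  set p : Fin m → ℝ := fun i => -Real.log ‖w i‖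
  have hp := isFanDecomp_of_mem_momentAngleComplex (a := a) hKdown hw (c := p) fun _ _ => rfl
  have hq := isFanDecomp_of_mem_momentAngleComplex (a := a) hKdown hw' (c := p - v)
    fun i hi => by
      have hwi : w i ≠ 0 := by simpa [hw'w i, Real.exp_ne_zero] using hi
      rw [hw'w i, norm_mul, Complex.norm_real, Real.norm_of_nonneg (Real.exp_pos _).le,
        Real.log_mul (Real.exp_ne_zero _) (norm_ne_zero_iff.2 hwi), Real.log_exp]
      simp [p]
      ring
  rw [hzero, show ∑ i, (p - v) i • a i = ∑ i, p i • a i by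
    simp [sub_smul, Finset.sum_sub_distrib, hv]] at hq
  have hv0 : v = 0 := by simpa using (hp.unique hInd hInter hq).symm
  funext i
  simp [hw'w i, hv0]

noncomputable def chartLogNorm (I : Set (Fin m)) (z : Fin m → ℂ) : Fin m → ℝ :=
  Iᶜ.indicator fun i => Real.log ‖z i‖

noncomputable def chartDecomp (a : Fin m → Fin n → ℝ) (K : Set (Set (Fin m)))
    (I : Set (Fin m)) (z : Fin m → ℂ) : Fin m → ℝ :=
  fanDecomp a K I (-∑ i, chartLogNorm I z i • a i)

noncomputable def chartRetract (a : Fin m → Fin n → ℝ) (K : Set (Set (Fin m)))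
    (I : Set (Fin m)) (z : Fin m → ℂ) : Fin m → ℂ :=
  fun i => Real.exp (-(chartLogNorm I z i + chartDecomp a K I z i)) * z i

def chartDomain (a : Fin m → Fin n → ℝ) (K : Set (Set (Fin m))) (I : Set (Fin m)) :
    Set (Fin m → ℂ) :=
  (Iᶜ.pi fun _ => {0}ᶜ) ∩ chartRetract a K I ⁻¹' I.pi fun _ => Metric.ball 0 1

theorem mem_chartDomain_zeroSet (z : Fin m → ℂ) : z ∈ chartDomain a K {i | z i = 0} :=
  ⟨fun _ hi => hi, fun i (hi : z i = 0) => by simp [chartRetract, hi]⟩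

theorem norm_chartRetract_of_notMem {I : Set (Fin m)} {z : Fin m → ℂ} {i : Fin m}
    (hi : i ∉ I) (hzi : z i ≠ 0) :
    ‖chartRetract a K I z i‖ = Real.exp (-chartDecomp a K I z i) := by
  have hlog : Real.log ‖z i‖ = chartLogNorm I z i :=
    (indicator_of_mem (mem_compl hi) fun i => Real.log ‖z i‖).symm
  rw [chartRetract, norm_mul, Complex.norm_real, Real.norm_of_nonneg (Real.exp_pos _).le]
  rw [← Real.exp_log (norm_pos_iff.2 hzi), ← Real.exp_add, hlog]
  ring_nf

namespace IsCompleteSimplicialFan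

theorem sameROrbit_chartRetract (hF : IsCompleteSimplicialFan a K) {I : Set (Fin m)}
    (hI : I ∈ K) (z : Fin m → ℂ) : SameROrbit a z (chartRetract a K I z) := by
  refine ⟨_, ?_, fun i => rfl⟩
  have hx := (hF.isFanDecomp_fanDecomp hI (-∑ i, chartLogNorm I z i • a i)).2.2
  simp only [neg_smul, add_smul, Finset.sum_neg_distrib, Finset.sum_add_distrib]
  rw [chartDecomp, ← hx, add_neg_cancel, neg_zero]

theorem chartRetract_mem_momentAngleComplex (hF : IsCompleteSimplicialFan a K)
    {I : Set (Fin m)} (hI : I ∈ K) {z : Fin m → ℂ} (hz : z ∈ chartDomain a K I) :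
    chartRetract a K I z ∈ momentAngleComplex m K := by
  obtain ⟨hc, hcK, -⟩ := hF.isFanDecomp_fanDecomp hI (-∑ i, chartLogNorm I z i • a i)
  obtain ⟨hz0, hzI⟩ := hz
  refine ⟨fun i => ?_, hF.down _ hcK _ fun i hi => ?_⟩
  · by_cases hiI : i ∈ I
    · exact (mem_ball_zero_iff.1 (hzI i hiI)).le
    · rw [norm_chartRetract_of_notMem hiI (hz0 i hiI), Real.exp_le_one_iff, neg_nonpos]
      exact hc i hiI
  · by_cases hiI : i ∈ I
    · exact Or.inl hiI
    · refine Or.inr fun h0 => ?_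
      simp [norm_chartRetract_of_notMem hiI (hz0 i hiI), chartDecomp, h0] at hi

theorem continuousOn_chartRetract (hF : IsCompleteSimplicialFan a K) {I : Set (Fin m)}
    (hI : I ∈ K) : ContinuousOn (chartRetract a K I) (Iᶜ.pi fun _ => {0}ᶜ) := by
  have hlog : ContinuousOn (chartLogNorm I) (Iᶜ.pi fun _ => {0}ᶜ) := by
    refine continuousOn_pi.2 fun i => ?_
    by_cases hi : i ∈ I
    · simp only [chartLogNorm, indicator_of_notMem (notMem_compl_iff.2 hi)]
      exact continuousOn_const
    · simp only [chartLogNorm, indicator_of_mem (mem_compl hi)]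
      exact (continuous_apply i).norm.continuousOn.log fun z hz => norm_ne_zero_iff.2 (hz i hi)
  have hdec : ContinuousOn (chartDecomp a K I) (Iᶜ.pi fun _ => {0}ᶜ) :=
    (hF.continuous_fanDecomp hI).comp_continuousOn (by fun_prop)
  exact continuousOn_pi.2 fun i => by unfold chartRetract; fun_prop

theorem isOpen_chartDomain (hF : IsCompleteSimplicialFan a K) {I : Set (Fin m)}
    (hI : I ∈ K) : IsOpen (chartDomain a K I) :=
  (hF.continuousOn_chartRetract hI).isOpen_inter_preimage
    (isOpen_set_pi (toFinite _) fun _ _ => isOpen_compl_singleton)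
    (isOpen_set_pi (toFinite _) fun _ _ => Metric.isOpen_ball)

theorem exists_continuous_retraction (hF : IsCompleteSimplicialFan a K) :
    ∃ ρ : UK m K → momentAngleComplex m K,
      Continuous ρ ∧ ∀ z : UK m K, SameROrbit a z (ρ z) := by
  refine ⟨fun z => ⟨chartRetract a K {i | z.1 i = 0} z,
      hF.chartRetract_mem_momentAngleComplex z.2 (mem_chartDomain_zeroSet _)⟩,
    Continuous.subtype_mk (continuous_iff_continuousAt.2 fun z₀ => ?_) _,
    fun z => hF.sameROrbit_chartRetract z.2 z⟩
  set I₀ := {i | z₀.1 i = 0}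
  have hchart : ContinuousAt (fun z : UK m K => chartRetract a K I₀ z) z₀ :=
    ((hF.continuousOn_chartRetract z₀.2).continuousAt
      ((isOpen_set_pi (toFinite _) fun _ _ => isOpen_compl_singleton).mem_nhds
        fun _ hi => hi)).comp continuous_subtype_val.continuousAt
  refine hchart.congr ?_
  filter_upwards [continuous_subtype_val.continuousAt.preimage_mem_nhds
    ((hF.isOpen_chartDomain z₀.2).mem_nhds (mem_chartDomain_zeroSet _))] with z hz
  -- both charts give the point of `Z_K` in the orbit of `z`
  exact eq_of_sameROrbit hF.down hF.linearIndependent hF.cone_inter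
    (hF.chartRetract_mem_momentAngleComplex z₀.2 hz)
    (hF.chartRetract_mem_momentAngleComplex z.2 (mem_chartDomain_zeroSet _))
    ((hF.sameROrbit_chartRetract z₀.2 z).symm.trans (hF.sameROrbit_chartRetract z.2 z))

end IsCompleteSimplicialFan

end Fan

theorem ZK_homeomorphic_to_UK_quotient_R_general (n m : ℕ)
    (a : Fin m → (Fin n → ℝ)) (K : Set (Set (Fin m)))
    (hKdown : ∀ I ∈ K, ∀ J ⊆ I, J ∈ K)
    (hInd : ∀ I ∈ K, LinearIndependent ℝ (fun i : I => a i.1))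
    (hInter : ∀ I ∈ K, ∀ J ∈ K, cone a I ∩ cone a J = cone a (I ∩ J))
    (hCover : (⋃ I ∈ K, cone a I) = Set.univ) :
    ∃ e : momentAngleComplex m K ≃ₜ Quot (ROrbitRel n m a K),
      ∀ (z : momentAngleComplex m K) (h : (z : Fin m → ℂ) ∈ UK m K),
        e z = Quot.mk (ROrbitRel n m a K) ⟨(z : Fin m → ℂ), h⟩ := by
  have hF : IsCompleteSimplicialFan a K := ⟨hKdown, hInd, hInter, hCover⟩
  obtain ⟨ρ, hρ, hρz⟩ := hF.exists_continuous_retraction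
  have hZK : ∀ {w w'}, w ∈ momentAngleComplex m K → w' ∈ momentAngleComplex m K →
      SameROrbit a w w' → w = w' := eq_of_sameROrbit hKdown hInd hInter
  obtain ⟨e, he⟩ := exists_homeomorph_quot_of_retraction
    (ι := fun z => ⟨z, momentAngleComplex_subset_UK hKdown z.2⟩)
    (continuous_subtype_val.subtype_mk _) hρ
    (fun z => Subtype.ext (hZK z.2 (ρ _).2 (hρz _)).symm)
    (fun z => rOrbitRel_iff.2 (hρz z).symm)
    (fun z w hzw => Subtype.ext (hZK (ρ z).2 (ρ w).2
      ((hρz z).symm.trans ((rOrbitRel_iff.1 hzw).trans (hρz w)))))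
  exact ⟨e, fun z _ => he z⟩

/-- If `(K; a₁, …, a_m)` underlies a complete simplicial fan in ℝⁿ, then the
composition of the inclusion `Z_K ↪ U(K)` with the quotient map `U(K) → U(K)/R` is a
homeomorphism from `Z_K` onto the orbit space `U(K)/R` (with the quotient topology). -/
theorem ZK_homeomorphic_to_UK_quotient_R (n m : ℕ) (hn : 1 ≤ n) (hm : 1 ≤ m)
    (a : Fin m → (Fin n → ℝ)) (K : Set (Set (Fin m)))
    (hKempty : ∅ ∈ K) (hKdown : ∀ I ∈ K, ∀ J ⊆ I, J ∈ K)
    (hInd : ∀ I ∈ K, LinearIndependent ℝ (fun i : I => a i.1))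
    (hInter : ∀ I ∈ K, ∀ J ∈ K, cone a I ∩ cone a J = cone a (I ∩ J))
    (hCover : (⋃ I ∈ K, cone a I) = Set.univ) :
    ∃ e : momentAngleComplex m K ≃ₜ Quot (ROrbitRel n m a K),
      ∀ (z : momentAngleComplex m K) (h : (z : Fin m → ℂ) ∈ UK m K),
        e z = Quot.mk (ROrbitRel n m a K) ⟨(z : Fin m → ℂ), h⟩ :=
  ZK_homeomorphic_to_UK_quotient_R_general n m a K hKdown hInd hInter hCover
end

section
/- Suppose that for every I ∈ K the vectors {a_i : i ∈ I} are linearly independent, and that m − n = 2ℓ. Then the group C_Ψ acts freely on U(K): if g ∈ C_Ψ, z ∈ U(K) and g_i z_i = z_i for all i = 1,…,m, then g_i = 1 for all i. -/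
/-!
If `g = exp Ψ(w)` fixes `z`, then `|g i| = 1`, i.e. `Re Ψ(w) i = 0`, wherever `z i ≠ 0`. Hence the
relation `∑ Re Ψ(w) i • a i = 0` only involves the `a i` with `z i = 0`, which are linearly
independent because the zero set of `z` lies in `K`. So `Re Ψ(w) = 0`, injectivity gives `w = 0`,
and `g = exp 0 = 1`.
-/

theorem LinearIndepOn.eq_zero_of_sum_smul_eq_zero {ι R M : Type*} [Fintype ι] [Ring R]
    [AddCommGroup M] [Module R M] {v : ι → M} {s : Set ι} (hs : LinearIndepOn R v s)
    {c : ι → R} (hc : ∀ i ∉ s, c i = 0) (hsum : ∑ i, c i • v i = 0) : c = 0 := by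
  have h := linearIndepOn_iff.mp hs (Finsupp.equivFunOnFinite.symm c) (fun i hi => ?_) ?_
  · funext i
    simpa using DFunLike.congr_fun h i
  · by_contra his
    exact Finsupp.mem_support_iff.mp hi (hc i his)
  · rwa [Finsupp.linearCombination_apply, Finsupp.sum_fintype _ _ (by simp)]

theorem Complex.re_eq_zero_of_exp_eq_one {x : ℂ} (h : Complex.exp x = 1) : x.re = 0 := by
  simpa [Complex.norm_exp] using congrArg norm h

theorem CPsi_acts_freely_on_UK_general (n m l : ℕ)
    (a : Fin m → (Fin n → ℝ)) (K : Set (Set (Fin m)))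
    (hInd : ∀ I ∈ K, LinearIndependent ℝ (fun i : I => a i.1))
    (Ψ : (Fin l → ℂ) →ₗ[ℂ] (Fin m → ℂ))
    (hΨinj : Function.Injective fun w : Fin l → ℂ => fun i => (Ψ w i).re)
    (hΨker : ∀ w : Fin l → ℂ, ∑ i, (Ψ w i).re • a i = 0)
    (g : Fin m → ℂ) (hg : ∃ w : Fin l → ℂ, ∀ i, g i = Complex.exp (Ψ w i))
    (z : Fin m → ℂ) (hz : {i | z i = 0} ∈ K)
    (hfix : ∀ i, g i * z i = z i) :
    ∀ i, g i = 1 := by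
  obtain ⟨w, hw⟩ := hg
  have hre_off_zeros : ∀ i ∉ {i | z i = 0}, (Ψ w i).re = 0 := fun i hi =>
    Complex.re_eq_zero_of_exp_eq_one <| hw i ▸ (mul_eq_right₀ hi).mp (hfix i)
  have hre : (fun i => (Ψ w i).re) = 0 :=
    LinearIndepOn.eq_zero_of_sum_smul_eq_zero (hInd _ hz) hre_off_zeros (hΨker w)
  have hw0 : w = 0 := hΨinj <| hre.trans (by ext; simp)
  intro i
  rw [hw i, hw0, map_zero, Pi.zero_apply, Complex.exp_zero]

/-- If for every `I ∈ K` the vectors `{a i : i ∈ I}` are linearly independent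
and `m - n = 2ℓ`, then the group `C_Ψ = exp Ψ(ℂ^ℓ)` acts freely on `U(K)`. -/
theorem CPsi_acts_freely_on_UK (n m l : ℕ) (hn : 1 ≤ n) (hl : 1 ≤ l)
    (hml : m = n + 2 * l)
    (a : Fin m → (Fin n → ℝ)) (K : Set (Set (Fin m)))
    (hKempty : ∅ ∈ K) (hKdown : ∀ I ∈ K, ∀ J ⊆ I, J ∈ K)
    (hInd : ∀ I ∈ K, LinearIndependent ℝ (fun i : I => a i.1))
    (Ψ : (Fin l → ℂ) →ₗ[ℂ] (Fin m → ℂ))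
    (hΨinj : Function.Injective fun w : Fin l → ℂ => fun i => (Ψ w i).re)
    (hΨker : ∀ w : Fin l → ℂ, ∑ i, (Ψ w i).re • a i = 0)
    (g : Fin m → ℂ) (hg : ∃ w : Fin l → ℂ, ∀ i, g i = Complex.exp (Ψ w i))
    (z : Fin m → ℂ) (hz : {i | z i = 0} ∈ K)
    (hfix : ∀ i, g i * z i = z i) :
    ∀ i, g i = 1 :=
  CPsi_acts_freely_on_UK_general n m l a K hInd Ψ hΨinj hΨker g hg z hz hfix
end

section
/- The intersection of quadrics Z_P is nondegenerate if and only if the presentation of P is generic; that is: the ℝ-linear derivative at z of the map f : ℂ^m → ℝ^{m−n} (viewing ℂ^m as ℝ^{2m}), f(z)_j = Σ_{k=1}^m γ_{jk}|z_k|², is surjective at every point z ∈ Z_P if and only if for every x ∈ P the set of vectors {a_i : ⟨a_i,x⟩ + b_i = 0} is linearly independent. -/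
/-!
The derivative of `z ↦ Γ (‖z_k‖²)_k` at `z` is `w ↦ Γ (2⟪z_k, w_k⟫)_k`. Dually, it is onto iff no
`c ≠ 0` has `cᵀΓ` vanishing at every `k` with `z_k ≠ 0`. Since the rows of `Γ` are a basis of the
linear relations among the `a_k`, the vectors `cᵀΓ` are exactly these relations, so this says that
no nontrivial relation is supported on `{k | z_k = 0}`, i.e. those `a_k` are independent
(Gale duality). Finally, `ker Γ` is the image of `x ↦ (⟪a_k, x⟫)_k`, so `z ∈ Z_P` iff
`‖z_k‖² = ⟪a_k, x⟫ + b_k` for some `x`, which then lies in `P` and has active set `{k | z_k = 0}`.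
-/

open Matrix Submodule Set Function
open scoped RealInnerProductSpace

theorem Fintype.linearIndepOn_iff {K V ι : Type*} [Ring K] [AddCommGroup V] [Module K V]
    [Fintype ι] {v : ι → V} {s : Set ι} :
    LinearIndepOn K v s ↔ ∀ f : ι → K, (∀ i ∉ s, f i = 0) → ∑ i, f i • v i = 0 → f = 0 := by
  rw [_root_.linearIndepOn_iff]
  refine (Finsupp.linearEquivFunOnFinite K K ι).forall_congr fun l => ?_
  simp [Finsupp.mem_supported', Finsupp.linearCombination_apply, Finsupp.sum_fintype]

section DotProductDuality

variable {K κ : Type*} [Field K] [Fintype κ]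

theorem Submodule.mem_of_forall_dotProduct_eq_zero {W : Submodule K (κ → K)} {v : κ → K}
    (h : ∀ c : κ → K, (∀ w ∈ W, c ⬝ᵥ w = 0) → c ⬝ᵥ v = 0) : v ∈ W := by
  classical
  by_contra hv
  obtain ⟨φ, hφv, hφW⟩ := W.exists_dual_map_eq_bot_of_notMem hv inferInstance
  obtain ⟨c, rfl⟩ := (dotProductEquiv K κ).surjective φ
  exact hφv <| h c fun w hw => (mem_bot K).1 (hφW ▸ mem_map_of_mem hw)

theorem LinearMap.surjective_iff_forall_dotProduct_eq_zero {M : Type*} [AddCommGroup M]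
    [Module K M] (f : M →ₗ[K] κ → K) :
    Surjective f ↔ ∀ c : κ → K, (∀ x, c ⬝ᵥ f x = 0) → c = 0 := by
  classical
  refine ⟨fun hf c hc => funext fun j => ?_, fun h v => ?_⟩
  · obtain ⟨x, hx⟩ := hf (Pi.single j 1)
    simpa [hx] using hc x
  · refine mem_of_forall_dotProduct_eq_zero (W := LinearMap.range f) fun c hc => ?_
    rw [h c fun x => hc _ ⟨x, rfl⟩, zero_dotProduct]

end DotProductDuality

section GaleDuality

variable {K V ι κ : Type*} [Field K] [AddCommGroup V] [Module K V] [Fintype ι] [Fintype κ]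
  {a : ι → V} {Γ : Matrix κ ι K}

theorem sum_vecMul_smul_eq_zero (hrel : ∀ j, ∑ k, Γ j k • a k = 0) (c : κ → K) :
    ∑ k, (c ᵥ* Γ) k • a k = 0 := by
  simp only [vecMul_eq_sum, Finset.sum_apply, Pi.smul_apply, smul_eq_mul, Finset.sum_smul,
    mul_smul]
  rw [Finset.sum_comm]
  simp [← Finset.smul_sum, hrel]

theorem exists_vecMul_eq_of_sum_smul_eq_zero
    (hspan : ∀ γ : ι → K, ∑ k, γ k • a k = 0 → γ ∈ span K (range Γ)) {γ : ι → K}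
    (hγ : ∑ k, γ k • a k = 0) : ∃ c, c ᵥ* Γ = γ := by
  simpa only [vecMul_eq_sum] using (mem_span_range_iff_exists_fun K).1 (hspan γ hγ)

theorem linearIndepOn_iff_forall_vecMul (hrel : ∀ j, ∑ k, Γ j k • a k = 0)
    (hind : LinearIndependent K Γ)
    (hspan : ∀ γ : ι → K, ∑ k, γ k • a k = 0 → γ ∈ span K (range Γ)) (s : Set ι) :
    LinearIndepOn K a s ↔ ∀ c : κ → K, (∀ k ∉ s, (c ᵥ* Γ) k = 0) → c = 0 := by
  rw [Fintype.linearIndepOn_iff]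
  refine ⟨fun h c hc => vecMul_injective_iff.2 hind ?_, fun h γ hγ hγrel => ?_⟩
  · simp only [h _ hc (sum_vecMul_smul_eq_zero hrel c), zero_vecMul]
  · obtain ⟨c, rfl⟩ := exists_vecMul_eq_of_sum_smul_eq_zero hspan hγrel
    rw [h c hγ, zero_vecMul]

end GaleDuality

section KernelEqRange

variable {K ι η κ : Type*} [Field K] [Fintype ι] [Fintype η] [Fintype κ]
  {a : Matrix ι η K} {Γ : Matrix κ ι K}

theorem mulVec_eq_zero_iff_exists_mulVec_eq (hrel : ∀ j, ∑ k, Γ j k • a k = 0)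
    (hspan : ∀ γ : ι → K, ∑ k, γ k • a k = 0 → γ ∈ span K (range Γ)) {v : ι → K} :
    Γ *ᵥ v = 0 ↔ ∃ x, a *ᵥ x = v := by
  refine ⟨fun hv => ?_, ?_⟩
  · refine mem_of_forall_dotProduct_eq_zero (W := LinearMap.range a.mulVecLin) fun γ hγ => ?_
    have hγa : γ ᵥ* a = 0 := dotProduct_eq_zero _ fun x => by
      rw [← dotProduct_mulVec]; exact hγ _ ⟨x, rfl⟩
    obtain ⟨c, rfl⟩ := exists_vecMul_eq_of_sum_smul_eq_zero hspan (by rwa [← vecMul_eq_sum])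
    rw [← dotProduct_mulVec, hv, dotProduct_zero]
  · rintro ⟨x, rfl⟩
    have hΓa : Γ * a = 0 := by
      ext j i
      simpa [mul_apply, Finset.sum_apply] using congrFun (hrel j) i
    rw [mulVec_mulVec, hΓa, zero_mulVec]

theorem mulVec_eq_mulVec_iff_exists (hrel : ∀ j, ∑ k, Γ j k • a k = 0)
    (hspan : ∀ γ : ι → K, ∑ k, γ k • a k = 0 → γ ∈ span K (range Γ)) (u b : ι → K) :
    Γ *ᵥ u = Γ *ᵥ b ↔ ∃ x, ∀ k, u k = a k ⬝ᵥ x + b k := by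
  rw [← sub_eq_zero, ← mulVec_sub, mulVec_eq_zero_iff_exists_mulVec_eq hrel hspan]
  simp only [funext_iff, eq_sub_iff_add_eq, eq_comm (a := u _)]
  rfl

end KernelEqRange

section NormSq

variable {E ι : Type*} [NormedAddCommGroup E] [InnerProductSpace ℝ E]

noncomputable def normSqFDeriv (z : ι → E) : (ι → E) →L[ℝ] ι → ℝ :=
  ContinuousLinearMap.pi fun k => (2 • innerSL ℝ (z k)).comp (ContinuousLinearMap.proj k)

theorem normSqFDeriv_apply (z w : ι → E) (k : ι) : normSqFDeriv z w k = 2 * ⟪z k, w k⟫ := by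
  simp [normSqFDeriv]

variable [Fintype ι]

theorem hasFDerivAt_pi_norm_sq (z : ι → E) :
    HasFDerivAt (fun z : ι → E => fun k => ‖z k‖ ^ 2) (normSqFDeriv z) z :=
  hasFDerivAt_pi'.2 fun k => by
    rw [normSqFDeriv, ContinuousLinearMap.proj_pi]
    exact (hasStrictFDerivAt_norm_sq (z k)).hasFDerivAt.comp z
      (ContinuousLinearMap.proj (R := ℝ) (φ := fun _ : ι => E) k).hasFDerivAt

theorem forall_dotProduct_normSqFDeriv_eq_zero_iff (z : ι → E) (γ : ι → ℝ) :
    (∀ w, γ ⬝ᵥ normSqFDeriv z w = 0) ↔ ∀ k, z k ≠ 0 → γ k = 0 := by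
  classical
  refine ⟨fun h k hk => ?_, fun h w => Finset.sum_eq_zero fun k _ => ?_⟩
  · have := h (Pi.single k (z k))
    simp only [dotProduct, normSqFDeriv_apply] at this
    rw [Finset.sum_eq_single k (fun i _ hi => by simp [Pi.single_eq_of_ne hi]) (by simp),
      Pi.single_eq_same, real_inner_self_eq_norm_sq] at this
    simpa [hk] using this
  · rw [normSqFDeriv_apply]
    by_cases hk : z k = 0
    · simp [hk]
    · simp [h k hk]

variable {κ : Type*} [Fintype κ]

theorem hasFDerivAt_mulVec_norm_sq (Γ : Matrix κ ι ℝ) (z : ι → E) :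
    HasFDerivAt (fun z : ι → E => Γ *ᵥ fun k => ‖z k‖ ^ 2)
      (LinearMap.toContinuousLinearMap Γ.mulVecLin ∘L normSqFDeriv z) z :=
  (LinearMap.toContinuousLinearMap Γ.mulVecLin).hasFDerivAt.comp z (hasFDerivAt_pi_norm_sq z)

theorem surjective_mulVec_normSqFDeriv_iff (Γ : Matrix κ ι ℝ) (z : ι → E) :
    Surjective (LinearMap.toContinuousLinearMap Γ.mulVecLin ∘L normSqFDeriv z) ↔
      ∀ c : κ → ℝ, (∀ k, z k ≠ 0 → (c ᵥ* Γ) k = 0) → c = 0 := by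
  rw [← ContinuousLinearMap.coe_coe, LinearMap.surjective_iff_forall_dotProduct_eq_zero]
  simp [dotProduct_mulVec, forall_dotProduct_normSqFDeriv_eq_zero_iff]

end NormSq

theorem surjective_mulVec_normSqFDeriv_iff_linearIndepOn {E ι η κ : Type*}
    [NormedAddCommGroup E] [InnerProductSpace ℝ E] [Fintype ι] [Fintype η] [Fintype κ]
    {a : ι → η → ℝ} {b : ι → ℝ} {Γ : Matrix κ ι ℝ} (hrel : ∀ j, ∑ k, Γ j k • a k = 0)
    (hind : LinearIndependent ℝ Γ)
    (hspan : ∀ γ : ι → ℝ, ∑ k, γ k • a k = 0 → γ ∈ span ℝ (range Γ))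
    {z : ι → E} {x : η → ℝ} (hzx : ∀ k, ‖z k‖ ^ 2 = a k ⬝ᵥ x + b k) :
    Surjective (LinearMap.toContinuousLinearMap Γ.mulVecLin ∘L normSqFDeriv z) ↔
      LinearIndepOn ℝ a {k | a k ⬝ᵥ x + b k = 0} := by
  have hactive : ∀ k, k ∉ {k | a k ⬝ᵥ x + b k = 0} ↔ z k ≠ 0 := fun k => by simp [← hzx k]
  simp only [surjective_mulVec_normSqFDeriv_iff, linearIndepOn_iff_forall_vecMul hrel hind hspan,
    hactive]

theorem ZP_nondegenerate_iff_generic_general (n m : ℕ)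
    (a : Fin m → (Fin n → ℝ)) (b : Fin m → ℝ)
    (P : Set (Fin n → ℝ))
    (hP : P = {x | ∀ i, 0 ≤ ∑ j, a i j * x j + b i})
    (Γ : Fin (m - n) → (Fin m → ℝ))
    (hΓrel : ∀ j, ∑ k, Γ j k • a k = 0)
    (hΓind : LinearIndependent ℝ Γ)
    (hΓspan : ∀ γ : Fin m → ℝ, (∑ k, γ k • a k = 0) → γ ∈ Submodule.span ℝ (Set.range Γ))
    (ZP : Set (Fin m → ℂ))
    (hZP : ZP = {z | ∀ j, ∑ k, Γ j k * ‖z k‖ ^ 2 = ∑ k, Γ j k * b k}) :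
    (∀ z ∈ ZP, ∃ D : (Fin m → ℂ) →L[ℝ] (Fin (m - n) → ℝ),
        HasFDerivAt (fun z : Fin m → ℂ => fun j => ∑ k, Γ j k * ‖z k‖ ^ 2) D z ∧
        Function.Surjective D) ↔
    (∀ x ∈ P, LinearIndependent ℝ
        (fun i : {i : Fin m // ∑ j, a i j * x j + b i = 0} => a i.1)) := by
  subst hP hZP
  have hZP (z : Fin m → ℂ) : (∀ j, ∑ k, Γ j k * ‖z k‖ ^ 2 = ∑ k, Γ j k * b k) ↔
      ∃ x, ∀ k, ‖z k‖ ^ 2 = a k ⬝ᵥ x + b k :=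
    funext_iff.symm.trans (mulVec_eq_mulVec_iff_exists hΓrel hΓspan _ b)
  constructor
  · intro hND x hx
    choose z hz using fun k => exists_norm_eq ℂ (Real.sqrt_nonneg (a k ⬝ᵥ x + b k))
    have hzx (k) : ‖z k‖ ^ 2 = a k ⬝ᵥ x + b k := by rw [hz]; exact Real.sq_sqrt (hx k)
    obtain ⟨D, hD, hDsurj⟩ := hND z ((hZP z).2 ⟨x, hzx⟩)
    rw [hD.unique (hasFDerivAt_mulVec_norm_sq Γ z)] at hDsurj
    exact (surjective_mulVec_normSqFDeriv_iff_linearIndepOn hΓrel hΓind hΓspan hzx).1 hDsurj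
  · intro hgen z hz
    obtain ⟨x, hzx⟩ := (hZP z).1 hz
    have hx : ∀ k, 0 ≤ a k ⬝ᵥ x + b k := fun k => hzx k ▸ sq_nonneg _
    exact ⟨_, hasFDerivAt_mulVec_norm_sq Γ z,
      (surjective_mulVec_normSqFDeriv_iff_linearIndepOn hΓrel hΓind hΓspan hzx).2 (hgen x hx)⟩

/-- The intersection of quadrics `Z_P` is nondegenerate (the real derivative of
`f(z)_j = Σ_k γ_{jk}|z_k|²` is surjective at every point of `Z_P`) if and only if the
presentation of `P` is generic (at every `x ∈ P` the active normal vectors are linearly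
independent). -/
theorem ZP_nondegenerate_iff_generic (n m : ℕ) (hn : 1 ≤ n) (hm : 1 ≤ m)
    (a : Fin m → (Fin n → ℝ)) (b : Fin m → ℝ)
    (P : Set (Fin n → ℝ))
    (hP : P = {x | ∀ i, 0 ≤ ∑ j, a i j * x j + b i})
    (hPbdd : Bornology.IsBounded P)
    (hPint : (interior P).Nonempty)
    (hspan : Submodule.span ℝ (Set.range a) = ⊤)
    (Γ : Fin (m - n) → (Fin m → ℝ))
    (hΓrel : ∀ j, ∑ k, Γ j k • a k = 0)
    (hΓind : LinearIndependent ℝ Γ)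
    (hΓspan : ∀ γ : Fin m → ℝ, (∑ k, γ k • a k = 0) → γ ∈ Submodule.span ℝ (Set.range Γ))
    (ZP : Set (Fin m → ℂ))
    (hZP : ZP = {z | ∀ j, ∑ k, Γ j k * ‖z k‖ ^ 2 = ∑ k, Γ j k * b k}) :
    (∀ z ∈ ZP, ∃ D : (Fin m → ℂ) →L[ℝ] (Fin (m - n) → ℝ),
        HasFDerivAt (fun z : Fin m → ℂ => fun j => ∑ k, Γ j k * ‖z k‖ ^ 2) D z ∧
        Function.Surjective D) ↔
    (∀ x ∈ P, LinearIndependent ℝ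
        (fun i : {i : Fin m // ∑ j, a i j * x j + b i = 0} => a i.1)) :=
  ZP_nondegenerate_iff_generic_general n m a b P hP Γ hΓrel hΓind hΓspan ZP hZP
end

section
/- Let a_{m+1} ∈ ℝ^n and b_{m+1} ∈ ℝ satisfy ⟨a_{m+1},x⟩ + b_{m+1} > 0 for all x ∈ P (a redundant inequality whose hyperplane does not meet P), and let Z_{P'} := {z ∈ ℂ^{m+1} : there exists x ∈ P with |z_i|² = ⟨a_i,x⟩ + b_i for all i = 1,…,m+1}. Then the map Z_{P'} → Z_P × S¹ sending z to ((z_1,…,z_m), z_{m+1}/|z_{m+1}|), where S¹ = {w ∈ ℂ : |w| = 1}, is a homeomorphism. -/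
/-!
An affine function that is positive on the polyhedron `P` is bounded below on every line in `P`,
hence constant along it; so, when `P` is nonempty, its linear part vanishes on the common kernel of
the `⟨a_i, ·⟩` and is a combination `∑ μ_i ⟨a_i, ·⟩`. Thus for a witness `x` of `w ∈ Z_P` we get
`⟨a', x⟩ + b' = c(w) := ∑ μ_i (|w_i|² - b_i) + b'`, a continuous function of `w`, positive on `Z_P`.
So `Z_{P'}` is the circle bundle `{(w, v) : w ∈ Z_P, |v|² = c(w)}`, trivialized by
`(w, v) ↦ (w, v / |v|)` with inverse `(w, u) ↦ (w, u √c(w))`.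
-/

theorem eq_zero_of_forall_pos_add_mul {α β : ℝ} (h : ∀ t : ℝ, 0 < α + t * β) : β = 0 := by
  by_contra hβ
  have := h (-α / β)
  rw [div_mul_cancel₀ _ hβ] at this
  linarith

section Polyhedron

variable {E ι : Type*} [AddCommGroup E] [Module ℝ E]
  (ℓ : ι → E →ₗ[ℝ] ℝ) (b : ι → ℝ) (f : E →ₗ[ℝ] ℝ) (c : ℝ)

theorem iInf_ker_le_ker_of_pos_on_polyhedron {x₀ : E} (hx₀ : ∀ i, 0 ≤ ℓ i x₀ + b i)
    (hf : ∀ x, (∀ i, 0 ≤ ℓ i x + b i) → 0 < f x + c) :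
    ⨅ i, LinearMap.ker (ℓ i) ≤ LinearMap.ker f := by
  intro v hv
  simp only [Submodule.mem_iInf, LinearMap.mem_ker] at hv ⊢
  refine eq_zero_of_forall_pos_add_mul (α := f x₀ + c) fun t => ?_
  have hline := hf (x₀ + t • v) fun i => by simpa [hv i] using hx₀ i
  simpa [add_right_comm] using hline

theorem exists_eq_sum_mul_of_pos_on_polyhedron [Fintype ι]
    (hf : ∀ x, (∀ i, 0 ≤ ℓ i x + b i) → 0 < f x + c) :
    ∃ μ : ι → ℝ, ∀ x, (∀ i, 0 ≤ ℓ i x + b i) → f x = ∑ i, μ i * ℓ i x := by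
  by_cases hP : ∃ x₀, ∀ i, 0 ≤ ℓ i x₀ + b i
  · obtain ⟨x₀, hx₀⟩ := hP
    obtain ⟨μ, hμ⟩ := (Submodule.mem_span_range_iff_exists_fun ℝ).mp
      (mem_span_of_iInf_ker_le_ker (iInf_ker_le_ker_of_pos_on_polyhedron ℓ b f c hx₀ hf))
    exact ⟨μ, fun x _ => by simp [← hμ]⟩
  · exact ⟨0, fun x hx => (hP ⟨x, hx⟩).elim⟩

end Polyhedron

def Fin.initLastHomeomorph (X : Type*) [TopologicalSpace X] (m : ℕ) :
    (Fin (m + 1) → X) ≃ₜ (Fin m → X) × X where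
  toFun z := (Fin.init z, z (Fin.last m))
  invFun p := Fin.snoc p.1 p.2
  left_inv := Fin.snoc_init_self
  right_inv p := by simp
  continuous_toFun := by fun_prop
  continuous_invFun := by fun_prop

section CircleBundle

variable {X : Type*} (S : Set X) (c : X → ℝ)

def circleBundle : Set (X × ℂ) := {p | p.1 ∈ S ∧ ‖p.2‖ ^ 2 = c p.1}

variable {S c}

theorem norm_snd_ne_zero_of_mem_circleBundle (hpos : ∀ w ∈ S, 0 < c w) {p : X × ℂ}
    (hp : p ∈ circleBundle S c) : ‖p.2‖ ≠ 0 := by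
  have := hpos _ hp.1
  rw [← hp.2] at this
  exact fun h => by simp [h] at this

variable [TopologicalSpace X] (S)

noncomputable def circleBundleHomeomorph (hc : Continuous c) (hpos : ∀ w ∈ S, 0 < c w) :
    circleBundle S c ≃ₜ S × Metric.sphere (0 : ℂ) 1 where
  toFun p := (⟨p.1.1, p.2.1⟩, ⟨p.1.2 / ‖p.1.2‖, by
    simp [norm_snd_ne_zero_of_mem_circleBundle hpos p.2]⟩)
  invFun q := ⟨(q.1, q.2 * Real.sqrt (c q.1)), q.1.2, by
    simp [Real.sq_sqrt (hpos _ q.1.2).le]⟩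
  left_inv p := by
    ext
    · rfl
    · simp [← p.2.2, Real.sqrt_sq (norm_nonneg _), norm_snd_ne_zero_of_mem_circleBundle hpos p.2]
  right_inv q := by
    ext
    · rfl
    · simp [Real.sqrt_ne_zero'.mpr (hpos _ q.1.2), abs_of_nonneg (Real.sqrt_nonneg _)]
  continuous_toFun := by
    refine .prodMk (by fun_prop) (.subtype_mk (.div (by fun_prop) (by fun_prop) fun p => ?_) _)
    exact_mod_cast norm_snd_ne_zero_of_mem_circleBundle hpos p.2
  continuous_invFun := by fun_prop

end CircleBundle

theorem redundant_inequality_gives_circle_factor_general (n m : ℕ)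
    (a : Fin m → (Fin n → ℝ)) (b : Fin m → ℝ)
    (P : Set (Fin n → ℝ))
    (hP : P = {x | ∀ i, 0 ≤ ∑ j, a i j * x j + b i})
    (a' : Fin n → ℝ) (b' : ℝ)
    (hred : ∀ x ∈ P, 0 < ∑ j, a' j * x j + b')
    (ZP : Set (Fin m → ℂ))
    (hZP : ZP = {z | ∃ x ∈ P, ∀ i, ‖z i‖ ^ 2 = ∑ j, a i j * x j + b i})
    (ZP' : Set (Fin (m + 1) → ℂ))
    (hZP' : ZP' = {z | ∃ x ∈ P,
      (∀ i : Fin m, ‖z i.castSucc‖ ^ 2 = ∑ j, a i j * x j + b i) ∧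
      ‖z (Fin.last m)‖ ^ 2 = ∑ j, a' j * x j + b'}) :
    ∃ e : ZP' ≃ₜ ZP × Metric.sphere (0 : ℂ) 1,
      ∀ z : ZP',
        ((e z).1 : Fin m → ℂ) = (fun i => (z : Fin (m + 1) → ℂ) i.castSucc) ∧
        ((e z).2 : ℂ) = (z : Fin (m + 1) → ℂ) (Fin.last m) /
          (‖(z : Fin (m + 1) → ℂ) (Fin.last m)‖ : ℂ) := by
  subst hP
  obtain ⟨μ, hμ⟩ := exists_eq_sum_mul_of_pos_on_polyhedron (fun i => dotProductBilin ℝ ℝ (a i)) b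
    (dotProductBilin ℝ ℝ a') b' hred
  set c : (Fin m → ℂ) → ℝ := fun w => ∑ i, μ i * (‖w i‖ ^ 2 - b i) + b'
  have hc_eq : ∀ w, ∀ x : Fin n → ℝ, (∀ i, 0 ≤ ∑ j, a i j * x j + b i) →
      (∀ i, ‖w i‖ ^ 2 = ∑ j, a i j * x j + b i) → c w = ∑ j, a' j * x j + b' := by
    intro w x hx hw
    simp only [c, hw, add_sub_cancel_right]
    exact congrArg (· + b') (hμ x hx).symm
  have hc_pos : ∀ w ∈ ZP, 0 < c w := by
    rw [hZP]
    rintro w ⟨x, hx, hw⟩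
    exact hc_eq w x hx hw ▸ hred x hx
  have hsplit : ∀ z, z ∈ ZP' ↔ Fin.initLastHomeomorph ℂ m z ∈ circleBundle ZP c := by
    intro z
    rw [hZP, hZP']
    constructor
    · rintro ⟨x, hx, hinit, hlast⟩
      exact ⟨⟨x, hx, hinit⟩, hlast.trans (hc_eq _ x hx hinit).symm⟩
    · rintro ⟨⟨x, hx, hinit⟩, hlast⟩
      exact ⟨x, hx, hinit, hlast.trans (hc_eq _ x hx hinit)⟩
  exact ⟨((Fin.initLastHomeomorph ℂ m).subtype hsplit).trans
    (circleBundleHomeomorph ZP (by fun_prop) hc_pos), fun z => ⟨rfl, rfl⟩⟩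

/-- Adding a redundant linear inequality (whose hyperplane does not meet `P`)
to the presentation of `P` multiplies the moment-angle manifold `Z_P` by a circle:
the map `Z_{P'} → Z_P × S¹`, `z ↦ ((z₁,…,z_m), z_{m+1}/|z_{m+1}|)`, is a homeomorphism. -/
theorem redundant_inequality_gives_circle_factor (n m : ℕ) (hn : 1 ≤ n) (hm : 1 ≤ m)
    (a : Fin m → (Fin n → ℝ)) (b : Fin m → ℝ)
    (P : Set (Fin n → ℝ))
    (hP : P = {x | ∀ i, 0 ≤ ∑ j, a i j * x j + b i})
    (hPbdd : Bornology.IsBounded P)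
    (hPint : (interior P).Nonempty)
    (a' : Fin n → ℝ) (b' : ℝ)
    (hred : ∀ x ∈ P, 0 < ∑ j, a' j * x j + b')
    (ZP : Set (Fin m → ℂ))
    (hZP : ZP = {z | ∃ x ∈ P, ∀ i, ‖z i‖ ^ 2 = ∑ j, a i j * x j + b i})
    (ZP' : Set (Fin (m + 1) → ℂ))
    (hZP' : ZP' = {z | ∃ x ∈ P,
      (∀ i : Fin m, ‖z i.castSucc‖ ^ 2 = ∑ j, a i j * x j + b i) ∧
      ‖z (Fin.last m)‖ ^ 2 = ∑ j, a' j * x j + b'}) :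
    ∃ e : ZP' ≃ₜ ZP × Metric.sphere (0 : ℂ) 1,
      ∀ z : ZP',
        ((e z).1 : Fin m → ℂ) = (fun i => (z : Fin (m + 1) → ℂ) i.castSucc) ∧
        ((e z).2 : ℂ) = (z : Fin (m + 1) → ℂ) (Fin.last m) /
          (‖(z : Fin (m + 1) → ℂ) (Fin.last m)‖ : ℂ) :=
  redundant_inequality_gives_circle_factor_general n m a b P hP a' b' hred ZP hZP ZP' hZP'
end

section
/- Assume the presentation of P is generic. Then there exists a homeomorphism φ : Z_{K_P} → Z_P which is T^m-equivariant: φ(t·z) = t·φ(z) for all t ∈ T^m and z ∈ Z_{K_P}. -/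
/-!
Squaring the moduli of the coordinates, `z ↦ (‖z i‖ ^ 2)ᵢ`, identifies the orbit space of
`Z_{K_P}` with the cubical complex `C ⊆ [0, 1]^m` of `K_P`, and the orbit space of `Z_P` with the
image `Q` of `P` in the positive orthant under the slack map `x ↦ (⟨a_i, x⟩ + b_i)ᵢ`. A point of
either space is recovered from its orbit by the phases of its nonzero coordinates, so a
homeomorphism `C ≃ Q` preserving every coordinate hyperplane lifts to an equivariant one.

Both `C` and `Q` are cone complexes: each nonempty face `{y | y i = 0 for i ∈ I}` is the union of
the segments from a point of its relative interior to the faces for `I ∪ {j}`, `j ∉ I`. For `C` the apex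
is the vertex equal to `0` on `I` and `1` off `I`; for `Q` genericity provides a point of the face
at which all other slacks are positive, and boundedness makes the segments exhaust the face. The
faces of `C` and `Q` are nonempty for the same `I` by the definition of `K_P`, and a homeomorphism
is built by downward induction on the faces, mapping each segment from the apex of a face of `C`
affinely onto the corresponding segment in `Q`. The same construction from `Q` to `C` inverts it.
-/

open Set AffineMap Bornology Filter Topology

theorem Finset.card_compl_insert_lt {ι : Type*} [Fintype ι] [DecidableEq ι] {I : Finset ι}
    {j : ι} (hj : j ∉ I) : (insert j I)ᶜ.card < Iᶜ.card := by
  rw [Finset.compl_insert]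
  exact Finset.card_erase_lt_of_mem (Finset.mem_compl.mpr hj)

theorem Finset.downward_induction_insert {ι : Type*} [Fintype ι] [DecidableEq ι]
    {p : Finset ι → Prop} (step : ∀ I, (∀ j ∉ I, p (insert j I)) → p I) (I : Finset ι) : p I := by
  induction hn : Iᶜ.card using Nat.strong_induction_on generalizing I with
  | _ n ih => exact step I fun j hj => ih _ (hn ▸ Finset.card_compl_insert_lt hj) _ rfl

theorem AffineMap.lineMap_pi_apply {ι : Type*} (a v : ι → ℝ) (t : ℝ) (j : ι) :
    lineMap a v t j = a j + t * (v j - a j) := by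
  simp only [lineMap_apply_module', Pi.add_apply, Pi.smul_apply, Pi.sub_apply, smul_eq_mul]
  ring

theorem continuousWithinAt_biUnion {α β κ : Type*} [TopologicalSpace α] [TopologicalSpace β]
    {f : α → β} {J : Set κ} (hJ : J.Finite) {s : κ → Set α} {x : α}
    (h : ∀ j ∈ J, ContinuousWithinAt f (s j) x) : ContinuousWithinAt f (⋃ j ∈ J, s j) x := by
  rw [ContinuousWithinAt, nhdsWithin_biUnion hJ]
  exact tendsto_iSup.2 fun j => tendsto_iSup.2 (h j)

theorem eq_of_forall_lineMap_mem_of_isBounded {E : Type*} [NormedAddCommGroup E]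
    [NormedSpace ℝ E] {S : Set E} (hS : IsBounded S) {p q : E}
    (h : ∀ t : ℝ, 0 ≤ t → lineMap p q t ∈ S) : p = q := by
  by_contra hpq
  have hd : 0 < dist p q := dist_pos.mpr hpq
  set t := (Metric.diam S + 1) / dist p q
  have ht : 0 ≤ t := div_nonneg (by positivity) hd.le
  have hle := Metric.dist_le_diam_of_mem hS (h t ht) (by simpa using h 0 le_rfl)
  rw [dist_lineMap_left, Real.norm_of_nonneg ht, div_mul_cancel₀ _ hd.ne'] at hle
  linarith

theorem exists_dotProduct_eq_of_linearIndependent {κ σ : Type*} [Fintype κ] [Fintype σ]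
    {v : κ → σ → ℝ} (hv : LinearIndependent ℝ v) (w : κ → ℝ) : ∃ d, ∀ k, v k ⬝ᵥ d = w k := by
  have htop : LinearMap.range (Matrix.of v).mulVecLin = ⊤ := by
    refine Submodule.eq_top_of_finrank_eq ?_
    rw [← Matrix.rank, LinearIndependent.rank_matrix (M := Matrix.of v) hv,
      Module.finrank_fintype_fun_eq_card]
  obtain ⟨d, hd⟩ := LinearMap.range_eq_top.mp htop w
  exact ⟨d, fun k => congrFun hd k⟩

namespace MomentAngle

noncomputable section

variable {ι : Type*}

def face (S : Set (ι → ℝ)) (I : Finset ι) : Set (ι → ℝ) := {s ∈ S | ∀ i ∈ I, s i = 0}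

@[simp] theorem face_empty (S : Set (ι → ℝ)) : face S ∅ = S := by
  simp [face]

theorem face_anti (S : Set (ι → ℝ)) {I J : Finset ι} (h : I ⊆ J) : face S J ⊆ face S I :=
  fun _ hs => ⟨hs.1, fun i hi => hs.2 i (h hi)⟩

theorem mem_face_insert [DecidableEq ι] {S : Set (ι → ℝ)} {I : Finset ι} {s : ι → ℝ} {j : ι}
    (hs : s ∈ face S I) (hj : s j = 0) : s ∈ face S (insert j I) :=
  ⟨hs.1, fun i hi => (Finset.mem_insert.mp hi).elim (· ▸ hj) (hs.2 i)⟩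

theorem one_sub_lineMap_div {a v : ι → ℝ} {t : ℝ} {j : ι} (ha : a j ≠ 0) (hv : v j = 0) :
    1 - lineMap a v t j / a j = t := by
  rw [lineMap_pi_apply, hv]
  field_simp
  ring

variable [DecidableEq ι] [Fintype ι]

/-- For `a` positive off `I`, `1 - coneGauge I a s` is the largest `t` with `t • a ≤ s` off `I`:
the gauge is `0` at the apex `a` and `1` on the far faces `{s j = 0}`, `j ∉ I`. -/
def coneGauge (I : Finset ι) (a s : ι → ℝ) : ℝ :=
  if h : Iᶜ.Nonempty then Iᶜ.sup' h fun j => 1 - s j / a j else 0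

def coneRetract (I : Finset ι) (a s : ι → ℝ) : ι → ℝ := lineMap a s (coneGauge I a s)⁻¹

section coneGauge

variable {I : Finset ι} {a s : ι → ℝ}

theorem le_coneGauge {j : ι} (hj : j ∉ I) : 1 - s j / a j ≤ coneGauge I a s := by
  rw [coneGauge, dif_pos ⟨j, Finset.mem_compl.mpr hj⟩]
  exact Finset.le_sup' (fun j => 1 - s j / a j) (Finset.mem_compl.mpr hj)

theorem coneGauge_le {t : ℝ} (ht : 0 ≤ t) (h : ∀ j ∉ I, 1 - s j / a j ≤ t) :
    coneGauge I a s ≤ t := by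
  unfold coneGauge
  split_ifs
  · exact Finset.sup'_le _ _ fun j hj => h j (Finset.mem_compl.mp hj)
  · exact ht

theorem exists_coneGauge_eq (h : 0 < coneGauge I a s) :
    ∃ j ∉ I, 1 - s j / a j = coneGauge I a s := by
  unfold coneGauge at h ⊢
  split_ifs at h ⊢ with hne
  · obtain ⟨j, hj, hmax⟩ := Finset.exists_mem_eq_sup' hne fun j => 1 - s j / a j
    exact ⟨j, Finset.mem_compl.mp hj, hmax.symm⟩
  · exact (lt_irrefl _ h).elim

theorem continuous_coneGauge : Continuous (coneGauge I a) := by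
  unfold coneGauge
  split_ifs with hne
  · exact Continuous.finset_sup'_apply hne fun j _ => by fun_prop
  · exact continuous_const

theorem coneGauge_self (ha : ∀ j ∉ I, a j ≠ 0) : coneGauge I a a = 0 := by
  refine le_antisymm (coneGauge_le le_rfl fun j hj => by simp [ha j hj]) ?_
  unfold coneGauge
  split_ifs with hne
  · obtain ⟨j, hj⟩ := hne
    exact (by simp [ha j (Finset.mem_compl.mp hj)] : (0 : ℝ) ≤ 1 - a j / a j).trans
      (Finset.le_sup' (fun j => 1 - a j / a j) hj)
  · exact le_rfl

theorem coneGauge_le_one (ha : ∀ j ∉ I, 0 ≤ a j) (hs : ∀ j ∉ I, 0 ≤ s j) :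
    coneGauge I a s ≤ 1 :=
  coneGauge_le zero_le_one fun j hj => by linarith [div_nonneg (hs j hj) (ha j hj)]

theorem coneGauge_lineMap {v : ι → ℝ} {t : ℝ} {j : ι} (ha : ∀ k ∉ I, 0 < a k)
    (hv : ∀ k ∉ I, 0 ≤ v k) (hj : j ∉ I) (hvj : v j = 0) (ht : 0 ≤ t) :
    coneGauge I a (lineMap a v t) = t := by
  refine le_antisymm (coneGauge_le ht fun k hk => ?_) ?_
  · have hak := ha k hk
    have : 1 - lineMap a v t k / a k = t - t * (v k / a k) := by
      rw [lineMap_pi_apply]; field_simp; ring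
    rw [this]
    nlinarith [div_nonneg (hv k hk) hak.le]
  · exact (one_sub_lineMap_div (ha j hj).ne' hvj).symm.le.trans (le_coneGauge hj)

theorem lineMap_coneRetract (h : coneGauge I a s ≠ 0) :
    lineMap a (coneRetract I a s) (coneGauge I a s) = s := by
  simp [coneRetract, mul_inv_cancel₀ h]

theorem coneRetract_lineMap {v : ι → ℝ} {t : ℝ} (ht : t ≠ 0)
    (h : coneGauge I a (lineMap a v t) = t) : coneRetract I a (lineMap a v t) = v := by
  simp [coneRetract, h, inv_mul_cancel₀ ht]

theorem coneRetract_apply_of_eq {j : ι} (ha : a j ≠ 0) (h : 0 < coneGauge I a s)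
    (hj : 1 - s j / a j = coneGauge I a s) : coneRetract I a s j = 0 := by
  have hg : 1 - s j / a j ≠ 0 := hj ▸ h.ne'
  have hsa : s j - a j = -(a j * (1 - s j / a j)) := by field_simp; ring
  rw [coneRetract, lineMap_pi_apply, ← hj, hsa, mul_neg, mul_left_comm, inv_mul_cancel₀ hg,
    mul_one, add_neg_cancel]

end coneGauge

/-- `S` is a cone complex with apexes `c`: each nonempty face `face S I` is the union of the
segments from `c I`, a point of its relative interior, to the faces `face S (insert j I)`.
`coneGauge I (c I)` is the position on these segments and `coneRetract I (c I)` their far end. -/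
structure IsConeComplex (S : Set (ι → ℝ)) (c : Finset ι → ι → ℝ) : Prop where
  nonneg : S ⊆ Ici 0
  isBounded : IsBounded S
  apex_mem : ∀ I, (face S I).Nonempty → c I ∈ face S I
  apex_pos : ∀ I, (face S I).Nonempty → ∀ j ∉ I, 0 < c I j
  lineMap_mem : ∀ I, ∀ v ∈ face S I, ∀ t ∈ Icc (0 : ℝ) 1, lineMap (c I) v t ∈ S
  coneRetract_mem : ∀ I, ∀ s ∈ face S I, 0 < coneGauge I (c I) s → coneRetract I (c I) s ∈ S
  eq_apex : ∀ I, ∀ s ∈ face S I, coneGauge I (c I) s ≤ 0 → s = c I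

/-- Maps the segment from `c I` to `r ∈ face S (insert j I)` affinely onto the segment from `d I`
to the recursively defined image of `r`. The index `j` is any one attaining the gauge; by
`IsConeComplex.coneMap_eq_of_attains` the choice does not matter. -/
def coneMap (c d : Finset ι → ι → ℝ) (I : Finset ι) (s : ι → ℝ) : ι → ℝ :=
  if h : 0 < coneGauge I (c I) s then
    lineMap (d I) (coneMap c d (insert (exists_coneGauge_eq h).choose I) (coneRetract I (c I) s))
      (coneGauge I (c I) s)
  else d I
termination_by Iᶜ.card
decreasing_by exact Finset.card_compl_insert_lt (exists_coneGauge_eq h).choose_spec.1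

section coneMap

variable {S T : Set (ι → ℝ)} {c d : Finset ι → ι → ℝ} {I : Finset ι} {s : ι → ℝ}

theorem coneMap_of_not_pos (h : ¬ 0 < coneGauge I (c I) s) : coneMap c d I s = d I := by
  rw [coneMap, dif_neg h]

theorem exists_coneMap_eq (h : 0 < coneGauge I (c I) s) :
    ∃ j ∉ I, 1 - s j / c I j = coneGauge I (c I) s ∧ coneMap c d I s =
      lineMap (d I) (coneMap c d (insert j I) (coneRetract I (c I) s)) (coneGauge I (c I) s) := by
  obtain ⟨hj, hjs⟩ := (exists_coneGauge_eq h).choose_spec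
  exact ⟨_, hj, hjs, by rw [coneMap, dif_pos h]⟩

namespace IsConeComplex

variable (hS : IsConeComplex S c)
include hS

theorem coneGauge_nonneg (hs : s ∈ face S I) : 0 ≤ coneGauge I (c I) s := by
  by_contra! h
  obtain rfl := hS.eq_apex I s hs h.le
  rw [coneGauge_self fun j hj => (hS.apex_pos I ⟨_, hs⟩ j hj).ne'] at h
  exact lt_irrefl 0 h

theorem coneGauge_le_one (hs : s ∈ face S I) : coneGauge I (c I) s ≤ 1 :=
  MomentAngle.coneGauge_le_one (fun j hj => (hS.apex_pos I ⟨s, hs⟩ j hj).le)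
    fun j _ => hS.nonneg hs.1 j

theorem coneRetract_mem_face (hs : s ∈ face S I) (hpos : 0 < coneGauge I (c I) s) {j : ι}
    (hj : j ∉ I) (hjs : 1 - s j / c I j = coneGauge I (c I) s) :
    coneRetract I (c I) s ∈ face S (insert j I) := by
  refine ⟨hS.coneRetract_mem I s hs hpos, fun i hi => ?_⟩
  rcases Finset.mem_insert.mp hi with rfl | hi
  · exact coneRetract_apply_of_eq (hS.apex_pos I ⟨s, hs⟩ i hj).ne' hpos hjs
  · rw [coneRetract, lineMap_pi_apply, hs.2 i hi, (hS.apex_mem I ⟨s, hs⟩).2 i hi]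
    ring

theorem lineMap_mem_face {J : Finset ι} {v : ι → ℝ} {t : ℝ} (hIJ : I ⊆ J) (hv : v ∈ face S J)
    (ht : t ∈ Icc (0 : ℝ) 1) : lineMap (c I) v t ∈ face S I := by
  have hvI := face_anti S hIJ hv
  refine ⟨hS.lineMap_mem I v hvI t ht, fun i hi => ?_⟩
  rw [lineMap_pi_apply, hvI.2 i hi, (hS.apex_mem I ⟨v, hvI⟩).2 i hi]
  ring

theorem coneMap_eq_of_attains_of_forall_insert
    (hcompat : ∀ k ∉ I, ∀ r ∈ face S (insert k I), ∀ j ∉ insert k I, r j = 0 →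
      coneMap c d (insert k I) r = coneMap c d (insert j (insert k I)) r)
    (hs : s ∈ face S I) (hpos : 0 < coneGauge I (c I) s) {j : ι} (hj : j ∉ I)
    (hjs : 1 - s j / c I j = coneGauge I (c I) s) :
    coneMap c d I s =
      lineMap (d I) (coneMap c d (insert j I) (coneRetract I (c I) s)) (coneGauge I (c I) s) := by
  obtain ⟨k, hk, hks, hmap⟩ := exists_coneMap_eq (d := d) hpos
  rw [hmap]
  rcases eq_or_ne k j with rfl | hkj
  · rfl
  have hrk := hS.coneRetract_mem_face hs hpos hk hks
  have hrj := hS.coneRetract_mem_face hs hpos hj hjs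
  rw [hcompat k hk _ hrk j (by simp [hj, hkj.symm]) (hrj.2 j (Finset.mem_insert_self j I)),
    hcompat j hj _ hrj k (by simp [hk, hkj]) (hrk.2 k (Finset.mem_insert_self k I)),
    Finset.insert_comm]

theorem coneMap_eq_insert (I : Finset ι) : ∀ s ∈ face S I, ∀ j ∉ I, s j = 0 →
    coneMap c d I s = coneMap c d (insert j I) s := by
  induction I using Finset.downward_induction_insert with | step I ih => ?_
  intro s hs j hj hsj
  -- On the far face `{s j = 0}` the gauge is `1`, so `coneMap` just passes to that face.
  have hgauge : coneGauge I (c I) s = 1 := le_antisymm (hS.coneGauge_le_one hs)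
    (by simpa [hsj] using le_coneGauge (a := c I) (s := s) hj)
  have hjs : 1 - s j / c I j = coneGauge I (c I) s := by simp [hgauge, hsj]
  rw [hS.coneMap_eq_of_attains_of_forall_insert ih hs (hgauge ▸ one_pos) hj hjs, hgauge]
  simp [coneRetract, hgauge]

theorem coneMap_eq_of_attains (hs : s ∈ face S I) (hpos : 0 < coneGauge I (c I) s) {j : ι}
    (hj : j ∉ I) (hjs : 1 - s j / c I j = coneGauge I (c I) s) :
    coneMap c d I s =
      lineMap (d I) (coneMap c d (insert j I) (coneRetract I (c I) s)) (coneGauge I (c I) s) :=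
  hS.coneMap_eq_of_attains_of_forall_insert (fun k _ => hS.coneMap_eq_insert (insert k I))
    hs hpos hj hjs

section

variable (hT : IsConeComplex T d) (hST : ∀ I, (face S I).Nonempty → (face T I).Nonempty)
include hT hST

theorem mapsTo_coneMap (I : Finset ι) : MapsTo (coneMap c d I) (face S I) (face T I) := by
  induction I using Finset.downward_induction_insert with | step I ih => ?_
  intro s hs
  by_cases hpos : 0 < coneGauge I (c I) s
  · obtain ⟨j, hj, hjs, hmap⟩ := exists_coneMap_eq (d := d) hpos
    rw [hmap]
    exact hT.lineMap_mem_face (Finset.subset_insert j I)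
      (ih j hj (hS.coneRetract_mem_face hs hpos hj hjs)) ⟨hpos.le, hS.coneGauge_le_one hs⟩
  · rw [coneMap_of_not_pos hpos]
    exact hT.apex_mem I (hST I ⟨s, hs⟩)

theorem dist_coneMap_le (hs : s ∈ face S I) :
    dist (coneMap c d I s) (d I) ≤ coneGauge I (c I) s * Metric.diam T := by
  by_cases hpos : 0 < coneGauge I (c I) s
  · obtain ⟨j, hj, hjs, hmap⟩ := exists_coneMap_eq (d := d) hpos
    have hv := hS.mapsTo_coneMap hT hST _ (hS.coneRetract_mem_face hs hpos hj hjs)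
    rw [hmap, dist_lineMap_left, Real.norm_of_nonneg hpos.le]
    exact mul_le_mul_of_nonneg_left (Metric.dist_le_diam_of_mem hT.isBounded
      (hT.apex_mem I (hST I ⟨s, hs⟩)).1 hv.1) hpos.le
  · rw [coneMap_of_not_pos hpos, dist_self]
    exact mul_nonneg (hS.coneGauge_nonneg hs) Metric.diam_nonneg

theorem continuousWithinAt_coneMap_of_coneGauge_eq_zero {s₀ : ι → ℝ}
    (h0 : coneGauge I (c I) s₀ = 0) : ContinuousWithinAt (coneMap c d I) (face S I) s₀ := by
  rw [ContinuousWithinAt, coneMap_of_not_pos (by rw [h0]; exact lt_irrefl 0),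
    tendsto_iff_dist_tendsto_zero]
  have hlim : Tendsto (fun s => coneGauge I (c I) s * Metric.diam T) (𝓝[face S I] s₀)
      (𝓝 (coneGauge I (c I) s₀ * Metric.diam T)) :=
    ((continuous_coneGauge.mul continuous_const).tendsto s₀).mono_left nhdsWithin_le_nhds
  rw [h0, zero_mul] at hlim
  exact squeeze_zero' (Eventually.of_forall fun _ => dist_nonneg)
    (eventually_nhdsWithin_of_forall fun s hs => hS.dist_coneMap_le hT hST hs) hlim

theorem continuousOn_coneMap (I : Finset ι) : ContinuousOn (coneMap c d I) (face S I) := by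
  induction I using Finset.downward_induction_insert with | step I ih => ?_
  intro s₀ hs₀
  rcases (hS.coneGauge_nonneg hs₀).eq_or_lt with h0 | hpos
  · exact hS.continuousWithinAt_coneMap_of_coneGauge_eq_zero hT hST h0.symm
  -- Near `s₀` the face is covered by the closed pieces on which a given index attains the gauge;
  -- on each piece `coneMap` is an explicit continuous expression in `coneMap c d (insert j I)`.
  set g := coneGauge I (c I)
  have hg : Continuous g := continuous_coneGauge
  let D : ι → Set (ι → ℝ) := fun j => face S I ∩ {s | 0 < g s} ∩ {s | 1 - s j / c I j = g s}
  have hcover : face S I ∩ {s | 0 < g s} ⊆ ⋃ j ∈ {j | j ∉ I}, D j := fun s hs => by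
    obtain ⟨j, hj, hjs⟩ := exists_coneGauge_eq hs.2
    exact mem_biUnion hj ⟨hs, hjs⟩
  rw [← continuousWithinAt_inter ((isOpen_lt continuous_const hg).mem_nhds hpos)]
  refine (continuousWithinAt_biUnion (toFinite _) fun j hj => ?_).mono hcover
  by_cases hj₀ : 1 - s₀ j / c I j = g s₀
  · have hretract : ContinuousAt (coneRetract I (c I)) s₀ :=
      continuousAt_const.lineMap continuousAt_id (hg.continuousAt.inv₀ hpos.ne')
    have hmaps : MapsTo (coneRetract I (c I)) (D j) (face S (insert j I)) :=
      fun s hs => hS.coneRetract_mem_face hs.1.1 hs.1.2 hj hs.2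
    have hF : ContinuousWithinAt (fun s =>
        lineMap (d I) (coneMap c d (insert j I) (coneRetract I (c I) s)) (g s)) (D j) s₀ :=
      continuousWithinAt_const.lineMap
        ((ih j hj _ (hmaps ⟨⟨hs₀, hpos⟩, hj₀⟩)).comp hretract.continuousWithinAt hmaps)
        hg.continuousWithinAt
    exact hF.congr (fun s hs => hS.coneMap_eq_of_attains hs.1.1 hs.1.2 hj hs.2)
      (hS.coneMap_eq_of_attains hs₀ hpos hj hj₀)
  · refine continuousWithinAt_of_notMem_closure fun hcl => hj₀ ?_
    have hclosed : IsClosed {s : ι → ℝ | 1 - s j / c I j = g s} := isClosed_eq (by fun_prop) hg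
    exact hclosed.closure_subset_iff.mpr inter_subset_right hcl

theorem leftInvOn_coneMap (I : Finset ι) :
    LeftInvOn (coneMap d c I) (coneMap c d I) (face S I) := by
  induction I using Finset.downward_induction_insert with | step I ih => ?_
  intro s hs
  have hdI := hT.apex_pos I (hST I ⟨s, hs⟩)
  by_cases hpos : 0 < coneGauge I (c I) s
  · obtain ⟨j, hj, hjs, hmap⟩ := exists_coneMap_eq (d := d) hpos
    have hr := hS.coneRetract_mem_face hs hpos hj hjs
    set t := coneGauge I (c I) s
    set v := coneMap c d (insert j I) (coneRetract I (c I) s)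
    have hv : v ∈ face T (insert j I) := hS.mapsTo_coneMap hT hST _ hr
    have hvj : v j = 0 := hv.2 j (Finset.mem_insert_self j I)
    have hgauge : coneGauge I (d I) (lineMap (d I) v t) = t :=
      coneGauge_lineMap hdI (fun k _ => hT.nonneg hv.1 k) hj hvj hpos.le
    have hmem : lineMap (d I) v t ∈ face T I := hmap ▸ hS.mapsTo_coneMap hT hST I hs
    rw [hmap, hT.coneMap_eq_of_attains hmem (by rw [hgauge]; exact hpos) hj
      (by rw [hgauge]; exact one_sub_lineMap_div (hdI j hj).ne' hvj), hgauge,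
      coneRetract_lineMap hpos.ne' hgauge, ih j hj hr, lineMap_coneRetract hpos.ne']
  · rw [coneMap_of_not_pos hpos, coneMap_of_not_pos, hS.eq_apex I s hs (not_lt.mp hpos)]
    rw [coneGauge_self fun j hj => (hdI j hj).ne']
    exact lt_irrefl 0

theorem coneMap_apply_eq_zero (hs : s ∈ S) {i : ι} (hsi : s i = 0) : coneMap c d ∅ s i = 0 := by
  have hs' : s ∈ face S ∅ := by rwa [face_empty]
  rw [hS.coneMap_eq_insert ∅ s hs' i (Finset.notMem_empty i) hsi]
  exact (hS.mapsTo_coneMap hT hST _ (mem_face_insert hs' hsi)).2 i (Finset.mem_insert_self i ∅)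

end

theorem exists_homeomorph (hT : IsConeComplex T d)
    (hST : ∀ I, (face S I).Nonempty ↔ (face T I).Nonempty) :
    ∃ e : S ≃ₜ T, ∀ s i, (e s : ι → ℝ) i = 0 ↔ (s : ι → ℝ) i = 0 := by
  have hST' I := (hST I).1
  have hTS' I := (hST I).2
  have hf : MapsTo (coneMap c d ∅) S T := by simpa using hS.mapsTo_coneMap hT hST' ∅
  have hg : MapsTo (coneMap d c ∅) T S := by simpa using hT.mapsTo_coneMap hS hTS' ∅
  have hfc : ContinuousOn (coneMap c d ∅) S := by simpa using hS.continuousOn_coneMap hT hST' ∅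
  have hgc : ContinuousOn (coneMap d c ∅) T := by simpa using hT.continuousOn_coneMap hS hTS' ∅
  have hgf : LeftInvOn (coneMap d c ∅) (coneMap c d ∅) S := by
    simpa using hS.leftInvOn_coneMap hT hST' ∅
  have hfg : LeftInvOn (coneMap c d ∅) (coneMap d c ∅) T := by
    simpa using hT.leftInvOn_coneMap hS hTS' ∅
  let e : S ≃ₜ T :=
    { toFun := hf.restrict
      invFun := hg.restrict
      left_inv := fun s => Subtype.ext (hgf s.2)
      right_inv := fun t => Subtype.ext (hfg t.2)
      continuous_toFun := hfc.mapsToRestrict hf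
      continuous_invFun := hgc.mapsToRestrict hg }
  refine ⟨e, fun s i => ⟨fun h => ?_, hS.coneMap_apply_eq_zero hT hST' s.2⟩⟩
  rw [← e.symm_apply_apply s]
  exact hT.coneMap_apply_eq_zero hS hTS' (e s).2 h

end IsConeComplex

end coneMap

section cubicalComplex

/-- For a simplicial complex `K`, the union of the cubes `{y ∈ [0, 1]^ι | y i = 1 for i ∉ σ}`,
`σ ∈ K`. -/
def cubicalComplex (K : Set (Set ι)) : Set (ι → ℝ) := {y | y ∈ Icc 0 1 ∧ {i | y i < 1} ∈ K}

def cubeApex (I : Finset ι) : ι → ℝ := fun i => if i ∈ I then 0 else 1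

variable {K : Set (Set ι)} {I : Finset ι}

omit [Fintype ι] in
theorem setOf_cubeApex_lt_one : {i | cubeApex I i < 1} = ↑I := by
  ext i
  by_cases hi : i ∈ I <;> simp [cubeApex, hi]

omit [Fintype ι] in
theorem cubeApex_mem_Icc : cubeApex I ∈ Icc 0 1 :=
  ⟨fun i => by by_cases hi : i ∈ I <;> simp [cubeApex, hi],
    fun i => by by_cases hi : i ∈ I <;> simp [cubeApex, hi]⟩

omit [Fintype ι] [DecidableEq ι] in
theorem coe_subset_setOf_lt_one {y : ι → ℝ} (hy : y ∈ face (cubicalComplex K) I) :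
    ↑I ⊆ {i | y i < 1} := fun i hi => by
  simp [hy.2 i hi]

omit [Fintype ι] in
theorem setOf_lineMap_cubeApex_lt_one {v : ι → ℝ} {t : ℝ} (hv : ∀ i ∈ I, v i = 0) (ht : 0 < t) :
    {i | lineMap (cubeApex I) v t i < 1} = {i | v i < 1} := by
  ext i
  by_cases hi : i ∈ I
  · simp [lineMap_pi_apply, cubeApex, hi, hv i hi]
  · simp only [mem_ofPred_eq, lineMap_pi_apply, cubeApex, if_neg hi]
    constructor <;> intro h <;> nlinarith

omit [Fintype ι] in
theorem cubeApex_mem_face (hK : IsLowerSet K) (hI : (face (cubicalComplex K) I).Nonempty) :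
    cubeApex I ∈ face (cubicalComplex K) I := by
  obtain ⟨y, hy⟩ := hI
  refine ⟨⟨cubeApex_mem_Icc, ?_⟩, fun i hi => if_pos hi⟩
  rw [setOf_cubeApex_lt_one]
  exact hK (coe_subset_setOf_lt_one hy) hy.1.2

omit [Fintype ι] in
theorem face_cubicalComplex_nonempty_iff (hK : IsLowerSet K) :
    (face (cubicalComplex K) I).Nonempty ↔ ↑I ∈ K :=
  ⟨fun ⟨y, hy⟩ => hK (coe_subset_setOf_lt_one hy) hy.1.2, fun hI =>
    ⟨cubeApex I, ⟨cubeApex_mem_Icc, by rwa [setOf_cubeApex_lt_one]⟩, fun _ hi => if_pos hi⟩⟩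

theorem coneRetract_cubeApex_mem_Icc {y : ι → ℝ} (hy : y ∈ face (cubicalComplex K) I)
    (hpos : 0 < coneGauge I (cubeApex I) y) : coneRetract I (cubeApex I) y ∈ Icc 0 1 := by
  have key (i : ι) : 0 ≤ coneRetract I (cubeApex I) y i ∧ coneRetract I (cubeApex I) y i ≤ 1 := by
    rw [coneRetract, lineMap_pi_apply]
    by_cases hi : i ∈ I
    · simp [cubeApex, hi, hy.2 i hi]
    · have hle := le_coneGauge (a := cubeApex I) (s := y) hi
      simp only [cubeApex, if_neg hi, div_one] at hle ⊢
      have h1 := (div_le_one hpos).mpr hle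
      have hyi : y i ≤ 1 := hy.1.1.2 i
      have h2 := div_nonneg (sub_nonneg.mpr hyi) hpos.le
      constructor <;> nlinarith [inv_mul_eq_div (coneGauge I (cubeApex I) y) (1 - y i)]
  exact ⟨fun i => (key i).1, fun i => (key i).2⟩

theorem isConeComplex_cubicalComplex (hK : IsLowerSet K) :
    IsConeComplex (cubicalComplex K) cubeApex where
  nonneg _ hy := hy.1.1
  isBounded := (Metric.isBounded_Icc (0 : ι → ℝ) 1).subset fun _ hy => hy.1
  apex_mem _ := cubeApex_mem_face hK
  apex_pos I _ j hj := by simp [cubeApex, hj]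
  lineMap_mem I v hv t ht := by
    refine ⟨(convex_Icc 0 1).lineMap_mem cubeApex_mem_Icc hv.1.1 ht, ?_⟩
    rcases ht.1.eq_or_lt with rfl | ht0
    · rw [lineMap_apply_zero]
      exact (cubeApex_mem_face hK ⟨v, hv⟩).1.2
    · rw [setOf_lineMap_cubeApex_lt_one hv.2 ht0]
      exact hv.1.2
  coneRetract_mem I y hy hpos := by
    refine ⟨coneRetract_cubeApex_mem_Icc hy hpos, ?_⟩
    rw [coneRetract, setOf_lineMap_cubeApex_lt_one hy.2 (inv_pos.mpr hpos)]
    exact hy.1.2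
  eq_apex I y hy hg := by
    funext i
    by_cases hi : i ∈ I
    · simp [cubeApex, hi, hy.2 i hi]
    · have := (le_coneGauge (a := cubeApex I) (s := y) hi).trans hg
      have hyi : y i ≤ 1 := hy.1.1.2 i
      simp only [cubeApex, if_neg hi, div_one] at this ⊢
      linarith

end cubicalComplex

theorem exists_isConeComplex_inter_Ici (L : AffineSubspace ℝ (ι → ℝ))
    (hb : IsBounded ((L : Set (ι → ℝ)) ∩ Ici 0))
    (hrel : ∀ I, (face ((L : Set (ι → ℝ)) ∩ Ici 0) I).Nonempty →
      ∃ q ∈ face ((L : Set (ι → ℝ)) ∩ Ici 0) I, ∀ j ∉ I, 0 < q j) :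
    ∃ c, IsConeComplex ((L : Set (ι → ℝ)) ∩ Ici 0) c := by
  choose! c hc hcpos using hrel
  refine ⟨c, inter_subset_right, hb, hc, hcpos, fun I v hv t ht => ?_, fun I s hs hpos => ?_,
    fun I s hs hg => ?_⟩
  · exact (L.convex.inter (convex_Ici 0)).lineMap_mem (hc I ⟨v, hv⟩).1 hv.1 ht
  · refine ⟨AffineMap.lineMap_mem _ (hc I ⟨s, hs⟩).1.1 hs.1.1, fun k => ?_⟩
    rw [coneRetract, lineMap_pi_apply]
    by_cases hk : k ∈ I
    · simp [hs.2 k hk, (hc I ⟨s, hs⟩).2 k hk]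
    · have hck := hcpos I ⟨s, hs⟩ k hk
      have hle : c I k - s k ≤ coneGauge I (c I) s * c I k := by
        have := mul_le_mul_of_nonneg_right (le_coneGauge (a := c I) (s := s) hk) hck.le
        rwa [sub_mul, one_mul, div_mul_cancel₀ _ hck.ne'] at this
      have : (coneGauge I (c I) s)⁻¹ * (c I k - s k) ≤ c I k := by
        rw [inv_mul_le_iff₀ hpos]; linarith
      show 0 ≤ c I k + (coneGauge I (c I) s)⁻¹ * (s k - c I k)
      linarith [mul_neg (coneGauge I (c I) s)⁻¹ (c I k - s k)]
  · -- A point dominating the apex off `I` would give a whole ray inside the bounded polyhedron.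
    refine (eq_of_forall_lineMap_mem_of_isBounded hb fun t ht => ?_).symm
    refine ⟨AffineMap.lineMap_mem _ (hc I ⟨s, hs⟩).1.1 hs.1.1, fun k => ?_⟩
    show 0 ≤ lineMap (c I) s t k
    rw [lineMap_pi_apply]
    by_cases hk : k ∈ I
    · simp [hs.2 k hk, (hc I ⟨s, hs⟩).2 k hk]
    · have hck := hcpos I ⟨s, hs⟩ k hk
      have hsk : c I k ≤ s k := by
        have := (le_coneGauge (a := c I) (s := s) hk).trans hg
        rwa [sub_nonpos, one_le_div hck] at this
      nlinarith

section Polytope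

variable {σ : Type*} [Fintype σ] (a : ι → σ → ℝ) (b : ι → ℝ)

def slackMap : (σ → ℝ) →ᵃ[ℝ] (ι → ℝ) :=
  (Matrix.of a).mulVecLin.toAffineMap + AffineMap.const ℝ (σ → ℝ) b

def polytope : Set (σ → ℝ) := slackMap a b ⁻¹' Ici 0

omit [DecidableEq ι] [Fintype ι] in
theorem slackMap_apply (x : σ → ℝ) (i : ι) : slackMap a b x i = ∑ j, a i j * x j + b i := rfl

omit [DecidableEq ι] [Fintype ι] in
theorem slackMap_add_smul (x d : σ → ℝ) (t : ℝ) (i : ι) :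
    slackMap a b (x + t • d) i = slackMap a b x i + t * (a i ⬝ᵥ d) := by
  simp only [slackMap_apply, dotProduct, Pi.add_apply, Pi.smul_apply, smul_eq_mul, mul_add,
    Finset.sum_add_distrib, Finset.mul_sum, mul_left_comm t]
  ring

omit [DecidableEq ι] in
/-- Genericity lets one move from a point of the face in a direction that keeps the slacks in `I`
at zero and makes the other vanishing slacks increase. -/
theorem exists_slackMap_pos_of_linearIndependent
    (hgen : ∀ x ∈ polytope a b,
      LinearIndependent ℝ fun i : {i // slackMap a b x i = 0} => a i.1)
    {x : σ → ℝ} (hx : x ∈ polytope a b) {I : Finset ι} (hxI : ∀ i ∈ I, slackMap a b x i = 0) :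
    ∃ y, (∀ i ∈ I, slackMap a b y i = 0) ∧ ∀ j ∉ I, 0 < slackMap a b y j := by
  classical
  obtain ⟨d, hd⟩ := exists_dotProduct_eq_of_linearIndependent (hgen x hx)
    fun k => if k.1 ∈ I then 0 else 1
  have hev : ∀ᶠ t in 𝓝[>] (0 : ℝ), ∀ j, j ∉ I → 0 < slackMap a b (x + t • d) j := by
    refine eventually_all.mpr fun j => ?_
    rcases (hx j).eq_or_lt with hxj | hxj
    · filter_upwards [self_mem_nhdsWithin] with t ht hj
      rw [slackMap_add_smul, ← hxj, hd ⟨j, hxj.symm⟩, if_neg hj]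
      simpa using ht
    · have hcont : Continuous fun t : ℝ => slackMap a b x j + t * (a j ⬝ᵥ d) := by fun_prop
      have := (hcont.tendsto 0).eventually (lt_mem_nhds (by simpa using hxj))
      filter_upwards [nhdsWithin_le_nhds this] with t ht _
      rwa [slackMap_add_smul]
  obtain ⟨t, ht⟩ := hev.exists
  refine ⟨x + t • d, fun i hi => ?_, ht⟩
  rw [slackMap_add_smul, hxI i hi, hd ⟨i, hxI i hi⟩, if_pos hi, mul_zero, add_zero]

theorem exists_isConeComplex_range_slackMap_inter_Ici (hbdd : IsBounded (polytope a b))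
    (hgen : ∀ x ∈ polytope a b,
      LinearIndependent ℝ fun i : {i // slackMap a b x i = 0} => a i.1) :
    ∃ c, IsConeComplex (range (slackMap a b) ∩ Ici 0) c := by
  have hL : (((⊤ : AffineSubspace ℝ (σ → ℝ)).map (slackMap a b) : Set (ι → ℝ))) =
      range (slackMap a b) := by
    simp [AffineSubspace.coe_map, AffineSubspace.top_coe]
  have hcont : Continuous (slackMap a b) := AffineMap.continuous_of_finiteDimensional _
  rw [← hL]
  refine exists_isConeComplex_inter_Ici _ ?_ fun I ⟨q, hq, hqI⟩ => ?_
  · rw [hL, ← image_preimage_eq_range_inter]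
    exact ((Metric.isCompact_of_isClosed_isBounded (isClosed_Ici.preimage hcont) hbdd).image
      hcont).isBounded
  · rw [hL] at hq
    obtain ⟨⟨x, rfl⟩, hx⟩ := hq
    obtain ⟨y, hyI, hy⟩ := exists_slackMap_pos_of_linearIndependent a b hgen hx hqI
    refine ⟨slackMap a b y, ⟨?_, hyI⟩, hy⟩
    rw [hL]
    refine ⟨mem_range_self y, fun i => ?_⟩
    by_cases hi : i ∈ I
    · exact (hyI i hi).ge
    · exact (hy i hi).le

omit [DecidableEq ι] [Fintype ι] in
theorem face_range_slackMap_nonempty_iff (hne : (polytope a b).Nonempty) (I : Finset ι) :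
    (face (range (slackMap a b) ∩ Ici 0) I).Nonempty ↔ (I : Set ι) = ∅ ∨
      (⋂ i ∈ (I : Set ι), {x ∈ polytope a b | slackMap a b x i = 0}).Nonempty := by
  constructor
  · rintro ⟨_, ⟨⟨x, rfl⟩, hx⟩, hxI⟩
    exact Or.inr ⟨x, mem_iInter₂.mpr fun i hi => ⟨hx, hxI i hi⟩⟩
  · intro h
    suffices ∃ x ∈ polytope a b, ∀ i ∈ I, slackMap a b x i = 0 by
      obtain ⟨x, hx, hxI⟩ := this
      exact ⟨_, ⟨⟨x, rfl⟩, hx⟩, hxI⟩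
    rcases I.eq_empty_or_nonempty with rfl | ⟨i₀, hi₀⟩
    · obtain ⟨x, hx⟩ := hne
      exact ⟨x, hx, by simp⟩
    · obtain ⟨x, hx⟩ := h.resolve_left (by simpa using Finset.ne_empty_of_mem hi₀)
      have hx' := mem_iInter₂.mp hx
      exact ⟨x, (hx' i₀ hi₀).1, fun i hi => (hx' i hi).2⟩

omit [DecidableEq ι] [Fintype ι] in
theorem isLowerSet_setOf_eq_empty_or_nonempty_biInter {α : Type*} (F : ι → Set α) :
    IsLowerSet {I : Set ι | I = ∅ ∨ (⋂ i ∈ I, F i).Nonempty} := by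
  rintro I J hJI (hI | ⟨x, hx⟩)
  · exact Or.inl (subset_empty_iff.mp (hI ▸ hJI))
  · exact Or.inr ⟨x, biInter_subset_biInter_left hJI hx⟩

theorem exists_homeomorph_cubicalComplex_range_slackMap_inter_Ici
    (hbdd : IsBounded (polytope a b)) (hne : (polytope a b).Nonempty)
    (hgen : ∀ x ∈ polytope a b,
      LinearIndependent ℝ fun i : {i // slackMap a b x i = 0} => a i.1) :
    ∃ e : cubicalComplex {I : Set ι | I = ∅ ∨
        (⋂ i ∈ I, {x ∈ polytope a b | slackMap a b x i = 0}).Nonempty} ≃ₜ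
        (range (slackMap a b) ∩ Ici 0 : Set (ι → ℝ)),
      ∀ s i, (e s : ι → ℝ) i = 0 ↔ (s : ι → ℝ) i = 0 := by
  obtain ⟨c, hc⟩ := exists_isConeComplex_range_slackMap_inter_Ici a b hbdd hgen
  have hK := isLowerSet_setOf_eq_empty_or_nonempty_biInter
    fun i => {x ∈ polytope a b | slackMap a b x i = 0}
  exact (isConeComplex_cubicalComplex hK).exists_homeomorph hc fun I =>
    (face_cubicalComplex_nonempty_iff hK).trans (face_range_slackMap_nonempty_iff a b hne I).symm

end Polytope

section momentMap

omit [DecidableEq ι] [Fintype ι]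

def momentMap (z : ι → ℂ) : ι → ℝ := fun i => ‖z i‖ ^ 2

def rescale (r : ι → ℝ) (z : ι → ℂ) : ι → ℂ := fun i => ((√(r i) / ‖z i‖ : ℝ) : ℂ) * z i

variable {r : ι → ℝ} {z : ι → ℂ}

theorem momentMap_apply_eq_zero {i : ι} : momentMap z i = 0 ↔ z i = 0 := by
  simp [momentMap]

theorem continuous_momentMap : Continuous (momentMap : (ι → ℂ) → ι → ℝ) :=
  continuous_pi fun i => ((continuous_apply i).norm).pow 2

theorem momentMap_mul {t : ι → ℂ} (ht : ∀ i, ‖t i‖ = 1) (z : ι → ℂ) :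
    momentMap (t * z) = momentMap z := by
  funext i
  simp [momentMap, ht i]

theorem norm_rescale_apply (i : ι) : ‖rescale r z i‖ = if z i = 0 then 0 else √(r i) := by
  split_ifs with hz
  · simp [rescale, hz]
  · rw [rescale, norm_mul, Complex.norm_real, Real.norm_of_nonneg (by positivity),
      div_mul_cancel₀ _ (norm_ne_zero_iff.mpr hz)]

theorem norm_rescale_apply_le (i : ι) : ‖rescale r z i‖ ≤ √(r i) := by
  rw [norm_rescale_apply]
  split_ifs
  exacts [Real.sqrt_nonneg _, le_rfl]

theorem momentMap_rescale (hr : 0 ≤ r) (hrz : ∀ i, r i = 0 ↔ z i = 0) :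
    momentMap (rescale r z) = r := by
  funext i
  rw [momentMap, norm_rescale_apply]
  split_ifs with hz
  · simp [(hrz i).mpr hz]
  · exact Real.sq_sqrt (hr i)

theorem rescale_momentMap_rescale (hr : 0 ≤ r) (hrz : ∀ i, r i = 0 ↔ z i = 0) :
    rescale (momentMap z) (rescale r z) = z := by
  funext i
  by_cases hz : z i = 0
  · simp [rescale, hz]
  have hri : √(r i) ≠ 0 :=
    (Real.sqrt_pos.mpr <| (hr i).lt_of_ne fun h => hz ((hrz i).mp h.symm)).ne'
  have hnorm := norm_rescale_apply (r := r) (z := z) i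
  rw [if_neg hz] at hnorm
  change ((√(momentMap z i) / ‖rescale r z i‖ : ℝ) : ℂ) * rescale r z i = z i
  rw [hnorm, momentMap, Real.sqrt_sq (norm_nonneg _), rescale, ← mul_assoc, ← Complex.ofReal_mul,
    div_mul_div_cancel₀ hri, div_self (norm_ne_zero_iff.mpr hz), Complex.ofReal_one, one_mul]

theorem rescale_mul {t : ι → ℂ} (ht : ∀ i, ‖t i‖ = 1) (r : ι → ℝ) (z : ι → ℂ) :
    rescale r (t * z) = t * rescale r z := by
  funext i
  simp only [rescale, Pi.mul_apply, norm_mul, ht i, one_mul]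
  ring

theorem continuous_rescale {X : Type*} [TopologicalSpace X] {R : X → ι → ℝ} {Z : X → ι → ℂ}
    (hR : Continuous R) (hZ : Continuous Z) (h0 : ∀ x i, Z x i = 0 → R x i = 0) :
    Continuous fun x => rescale (R x) (Z x) := by
  refine continuous_pi fun i => continuous_iff_continuousAt.2 fun x₀ => ?_
  have hRi : Continuous fun x => R x i := (continuous_apply i).comp hR
  have hZi : Continuous fun x => Z x i := (continuous_apply i).comp hZ
  by_cases hz : Z x₀ i = 0
  · -- Where a coordinate vanishes its phase is lost, but the modulus `√(R x i)` tends to zero.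
    have hlim : Tendsto (fun x => √(R x i)) (𝓝 x₀) (𝓝 0) := by
      simpa [h0 x₀ i hz] using hRi.sqrt.tendsto x₀
    rw [ContinuousAt, show rescale (R x₀) (Z x₀) i = 0 by simp [rescale, hz]]
    exact squeeze_zero_norm (fun x => norm_rescale_apply_le i) hlim
  · exact (Complex.continuous_ofReal.continuousAt.comp
      (hRi.sqrt.continuousAt.div hZi.norm.continuousAt (norm_ne_zero_iff.mpr hz))).mul
      hZi.continuousAt

variable {S T : Set (ι → ℝ)}

def momentLift (f : S → T) (z : momentMap ⁻¹' S) : ι → ℂ := rescale (f ⟨momentMap z, z.2⟩) z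

theorem momentMap_momentLift (hT : T ⊆ Ici 0) {f : S → T}
    (hf : ∀ s i, (f s : ι → ℝ) i = 0 ↔ (s : ι → ℝ) i = 0) (z : momentMap ⁻¹' S) :
    momentMap (momentLift f z) = f ⟨momentMap z, z.2⟩ :=
  momentMap_rescale (hT (f _).2) fun i => (hf _ i).trans momentMap_apply_eq_zero

theorem momentLift_momentLift (hT : T ⊆ Ici 0) {f : S → T} {g : T → S}
    (hf : ∀ s i, (f s : ι → ℝ) i = 0 ↔ (s : ι → ℝ) i = 0) (hgf : ∀ s, g (f s) = s)
    (z : momentMap ⁻¹' S) (h : momentLift f z ∈ momentMap ⁻¹' T) :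
    momentLift g ⟨momentLift f z, h⟩ = z := by
  have hg : g ⟨momentMap (momentLift f z), h⟩ = ⟨momentMap z, z.2⟩ := by
    rw [← hgf ⟨momentMap z, z.2⟩]
    exact congrArg g (Subtype.ext (momentMap_momentLift hT hf z))
  rw [momentLift, hg]
  exact rescale_momentMap_rescale (hT (f _).2) fun i => (hf _ i).trans momentMap_apply_eq_zero

theorem continuous_momentLift {f : S → T} (hfc : Continuous f)
    (hf : ∀ s i, (f s : ι → ℝ) i = 0 ↔ (s : ι → ℝ) i = 0) : Continuous (momentLift f) :=
  continuous_rescale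
    (continuous_subtype_val.comp <| hfc.comp <|
      (continuous_momentMap.comp continuous_subtype_val).subtype_mk _)
    continuous_subtype_val fun _ i hz => (hf _ i).mpr (momentMap_apply_eq_zero.mpr hz)

theorem momentLift_mul (f : S → T) {t : ι → ℂ} (ht : ∀ i, ‖t i‖ = 1) {z w : momentMap ⁻¹' S}
    (hw : ∀ i, (w : ι → ℂ) i = t i * (z : ι → ℂ) i) : momentLift f w = t * momentLift f z := by
  have hwz : (w : ι → ℂ) = t * z := funext hw
  have hS : (⟨momentMap w, w.2⟩ : S) = ⟨momentMap z, z.2⟩ :=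
    Subtype.ext (by simp only [hwz, momentMap_mul ht])
  rw [momentLift, hS, hwz, rescale_mul ht]
  rfl

theorem exists_equivariant_homeomorph_preimage_momentMap (hS : S ⊆ Ici 0) (hT : T ⊆ Ici 0)
    (e : S ≃ₜ T) (he : ∀ s i, (e s : ι → ℝ) i = 0 ↔ (s : ι → ℝ) i = 0) :
    ∃ E : (momentMap ⁻¹' S) ≃ₜ (momentMap ⁻¹' T),
      ∀ t : ι → ℂ, (∀ i, ‖t i‖ = 1) →
        ∀ z w : momentMap ⁻¹' S, (∀ i, (w : ι → ℂ) i = t i * (z : ι → ℂ) i) →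
          ∀ i, (E w : ι → ℂ) i = t i * (E z : ι → ℂ) i := by
  have he' : ∀ t i, (e.symm t : ι → ℝ) i = 0 ↔ (t : ι → ℝ) i = 0 := fun t i => by
    simpa using (he (e.symm t) i).symm
  have hf (z : momentMap ⁻¹' S) : momentLift e z ∈ momentMap ⁻¹' T := by
    rw [mem_preimage, momentMap_momentLift hT he]
    exact (e _).2
  have hg (w : momentMap ⁻¹' T) : momentLift e.symm w ∈ momentMap ⁻¹' S := by
    rw [mem_preimage, momentMap_momentLift hS he']
    exact (e.symm _).2
  let E : (momentMap ⁻¹' S) ≃ₜ (momentMap ⁻¹' T) :=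
    { toFun z := ⟨momentLift e z, hf z⟩
      invFun w := ⟨momentLift e.symm w, hg w⟩
      left_inv z := Subtype.ext (momentLift_momentLift hT he e.symm_apply_apply z (hf z))
      right_inv w := Subtype.ext (momentLift_momentLift hS he' e.apply_symm_apply w (hg w))
      continuous_toFun := (continuous_momentLift e.continuous he).subtype_mk hf
      continuous_invFun := (continuous_momentLift e.symm.continuous he').subtype_mk hg }
  exact ⟨E, fun t ht z w hw i => congrFun (momentLift_mul e ht hw) i⟩

theorem momentMap_preimage_cubicalComplex (K : Set (Set ι)) :
    momentMap ⁻¹' cubicalComplex K = {z | (∀ i, ‖z i‖ ≤ 1) ∧ {i | ‖z i‖ < 1} ∈ K} := by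
  ext z
  simp [cubicalComplex, momentMap, Pi.le_def]

theorem momentMap_preimage_range_slackMap_inter_Ici {σ : Type*} [Fintype σ] (a : ι → σ → ℝ)
    (b : ι → ℝ) : momentMap ⁻¹' (range (slackMap a b) ∩ Ici 0) =
      {z | ∃ x ∈ polytope a b, ∀ i, ‖z i‖ ^ 2 = ∑ j, a i j * x j + b i} := by
  ext z
  constructor
  · rintro ⟨⟨x, hx⟩, hz⟩
    exact ⟨x, show slackMap a b x ∈ Ici 0 from hx ▸ hz, fun i => (congrFun hx i).symm⟩
  · rintro ⟨x, hx, hxz⟩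
    have hxz : slackMap a b x = momentMap z := funext fun i => (hxz i).symm
    exact ⟨⟨x, hxz⟩, hxz ▸ hx⟩

end momentMap

end

end MomentAngle

theorem ZKP_equivariantly_homeomorphic_ZP_general (n m : ℕ)
    (a : Fin m → (Fin n → ℝ)) (b : Fin m → ℝ)
    (P : Set (Fin n → ℝ))
    (hP : P = {x | ∀ i, 0 ≤ ∑ j, a i j * x j + b i})
    (hPbdd : Bornology.IsBounded P)
    (hPint : (interior P).Nonempty)
    (hgeneric : ∀ x ∈ P, LinearIndependent ℝ
      (fun i : {i : Fin m // ∑ j, a i j * x j + b i = 0} => a i.1))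
    (F : Fin m → Set (Fin n → ℝ))
    (hF : ∀ i, F i = {x ∈ P | ∑ j, a i j * x j + b i = 0})
    (KP : Set (Set (Fin m)))
    (hKP : KP = {I | I = ∅ ∨ (⋂ i ∈ I, F i).Nonempty})
    (ZKP : Set (Fin m → ℂ))
    (hZKP : ZKP = {z | (∀ i, ‖z i‖ ≤ 1) ∧ {i | ‖z i‖ < 1} ∈ KP})
    (ZP : Set (Fin m → ℂ))
    (hZP : ZP = {z | ∃ x ∈ P, ∀ i, ‖z i‖ ^ 2 = ∑ j, a i j * x j + b i}) :
    ∃ e : ZKP ≃ₜ ZP,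
      ∀ t : Fin m → ℂ, (∀ i, ‖t i‖ = 1) →
        ∀ z w : ZKP, (∀ i, (w : Fin m → ℂ) i = t i * (z : Fin m → ℂ) i) →
          ∀ i, (e w : Fin m → ℂ) i = t i * (e z : Fin m → ℂ) i := by
  open MomentAngle in
  obtain rfl : P = polytope a b := hP
  obtain ⟨e, he⟩ := exists_homeomorph_cubicalComplex_range_slackMap_inter_Ici a b hPbdd
    (hPint.mono interior_subset) hgeneric
  obtain rfl : F = fun i => {x ∈ polytope a b | slackMap a b x i = 0} := funext hF
  obtain rfl : ZKP = momentMap ⁻¹' cubicalComplex KP :=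
    hZKP.trans (momentMap_preimage_cubicalComplex KP).symm
  obtain rfl : ZP = momentMap ⁻¹' (range (slackMap a b) ∩ Ici 0) :=
    hZP.trans (momentMap_preimage_range_slackMap_inter_Ici a b).symm
  subst hKP
  exact exists_equivariant_homeomorph_preimage_momentMap (fun _ hy => hy.1.1)
    inter_subset_right e he

/-- For a generic presentation of `P`, there is a `T^m`-equivariant
homeomorphism between the moment-angle complex `Z_{K_P}` of the dual simplicial complex
`K_P` and the intersection-of-quadrics model `Z_P`. -/
theorem ZKP_equivariantly_homeomorphic_ZP (n m : ℕ) (hn : 1 ≤ n) (hm : 1 ≤ m)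
    (a : Fin m → (Fin n → ℝ)) (b : Fin m → ℝ)
    (P : Set (Fin n → ℝ))
    (hP : P = {x | ∀ i, 0 ≤ ∑ j, a i j * x j + b i})
    (hPbdd : Bornology.IsBounded P)
    (hPint : (interior P).Nonempty)
    (hgeneric : ∀ x ∈ P, LinearIndependent ℝ
      (fun i : {i : Fin m // ∑ j, a i j * x j + b i = 0} => a i.1))
    (F : Fin m → Set (Fin n → ℝ))
    (hF : ∀ i, F i = {x ∈ P | ∑ j, a i j * x j + b i = 0})
    (KP : Set (Set (Fin m)))
    (hKP : KP = {I | I = ∅ ∨ (⋂ i ∈ I, F i).Nonempty})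
    (ZKP : Set (Fin m → ℂ))
    (hZKP : ZKP = {z | (∀ i, ‖z i‖ ≤ 1) ∧ {i | ‖z i‖ < 1} ∈ KP})
    (ZP : Set (Fin m → ℂ))
    (hZP : ZP = {z | ∃ x ∈ P, ∀ i, ‖z i‖ ^ 2 = ∑ j, a i j * x j + b i}) :
    ∃ e : ZKP ≃ₜ ZP,
      ∀ t : Fin m → ℂ, (∀ i, ‖t i‖ = 1) →
        ∀ z w : ZKP, (∀ i, (w : Fin m → ℂ) i = t i * (z : Fin m → ℂ) i) →
          ∀ i, (e w : Fin m → ℂ) i = t i * (e z : Fin m → ℂ) i :=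
  ZKP_equivariantly_homeomorphic_ZP_general n m a b P hP hPbdd hPint hgeneric F hF KP hKP ZKP hZKP
    ZP hZP
end
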